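/- arXiv:1610.01676 — 5 statements merged into one kernel-verified Lean document; each statement's English description precedes it below -/
import Mathlib

section
/- Let n be divisible by 3 and partition the vertex set {1,…,n} of the complete graph K_n into S₁, S₂, S₃ each of size n/3. Fix a decomposition of the edges between S₂ and S₃ into n/3 perfect matchings M₁,…,M_{n/3}, indexing the matchings by the elements of S₁. Then the family of triangles {i, j, k} for k ∈ S₁ and {i,j} ∈ M_k consists of (n/3)² pairwise edge-disjoint triangles in K_n, each pair of which shares a vertex or, viewed as a geometric triangle on points in convex position (S₂ and S₃ occupying two arcs and S₁ the third), has crossing edges. -/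
open Finset

/-- `x` lies strictly between `a` and `b` (vertices on a convex polygon are
labeled `0, …, n-1` in clockwise order). -/
def inside (a b x : ℕ) : Prop := min a b < x ∧ x < max a b

/-- Two chords `{a,b}` and `{c,d}` of a convex polygon cross iff exactly one of
`c, d` lies strictly between `a` and `b` in the cyclic order. -/
def chordCross (a b c d : ℕ) : Prop := Xor' (inside a b c) (inside a b d)

/-!
Two triangles sharing two vertices share them in two of the three arcs. Sharing the vertices in
`S₁` and `S₂` means equal indices; sharing `S₁` and `S₃` is excluded because each `σ k` is a
bijection, and sharing `S₂` and `S₃` because every edge between them lies in exactly one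
matching. Triangles with distinct vertices `k < k'` in `S₁` cross: the chord from `k` to `S₂`
separates `k'` from `S₃`.
-/

lemma chordCross_of_lt_of_lt_of_lt {a b c d : ℕ} (hac : a < c) (hcb : c < b) (hbd : b < d) :
    chordCross a b c d :=
  .inl ⟨by simp only [inside]; omega, by simp only [inside]; omega⟩

lemma chordCross_of_lt_of_lt_of_lt' {a b c d : ℕ} (hca : c < a) (had : a < d) (hdb : d < b) :
    chordCross a b c d :=
  .inr ⟨by simp only [inside]; omega, by simp only [inside]; omega⟩

def tripartiteTriangle (m a b c : ℕ) : Finset ℕ := {a, m + b, 2 * m + c}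

section tripartiteTriangle

variable {m a b c a' b' c' : ℕ}

lemma card_inter_tripartiteTriangle_le_one (ha : a < m) (hb : b < m) (ha' : a' < m)
    (hb' : b' < m) (hab : a = a' → b ≠ b') (hac : a = a' → c ≠ c') (hbc : b = b' → c ≠ c') :
    (tripartiteTriangle m a b c ∩ tripartiteTriangle m a' b' c').card ≤ 1 := by
  rw [card_le_one]
  intro x hx y hy
  simp only [tripartiteTriangle, mem_inter, mem_insert, mem_singleton] at hx hy
  omega

lemma tripartiteTriangle_inter_nonempty_or_cross (ha : a < m) (ha' : a' < m) (hb : b < m)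
    (hb' : b' < m) :
    (tripartiteTriangle m a b c ∩ tripartiteTriangle m a' b' c').Nonempty ∨
      ∃ x ∈ tripartiteTriangle m a b c, ∃ y ∈ tripartiteTriangle m a b c,
        ∃ u ∈ tripartiteTriangle m a' b' c', ∃ v ∈ tripartiteTriangle m a' b' c',
          x ≠ y ∧ u ≠ v ∧ chordCross x y u v := by
  rcases lt_trichotomy a a' with hlt | rfl | hgt
  · refine .inr ⟨a, by simp [tripartiteTriangle], m + b, by simp [tripartiteTriangle],
      a', by simp [tripartiteTriangle], 2 * m + c', by simp [tripartiteTriangle],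
      by omega, by omega, chordCross_of_lt_of_lt_of_lt hlt (by omega) (by omega)⟩
  · exact .inl ⟨a, by simp [tripartiteTriangle]⟩
  · refine .inr ⟨a, by simp [tripartiteTriangle], 2 * m + c, by simp [tripartiteTriangle],
      a', by simp [tripartiteTriangle], m + b', by simp [tripartiteTriangle],
      by omega, by omega, chordCross_of_lt_of_lt_of_lt' hgt (by omega) (by omega)⟩

end tripartiteTriangle

/-- With `n = 3m` convex-position points split into arcs `S₁ = {0,…,m-1}`,
`S₂ = {m,…,2m-1}`, `S₃ = {2m,…,3m-1}`, and the edges between `S₂` and `S₃`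
decomposed into `m` perfect matchings `σ k` indexed by `k ∈ S₁`, the triangles
`T k e = {k, m+e, 2m+σ k e}` are pairwise edge-disjoint (share at most one
vertex) and pairwise intersecting (share a vertex or have crossing edges). -/
theorem stmt8 (m : ℕ) (σ : Fin m → (Fin m ≃ Fin m))
    (hσ : ∀ a b : Fin m, ∃! k, σ k a = b) :
    let T : Fin m → Fin m → Finset ℕ :=
      fun k e => {(k : ℕ), m + (e : ℕ), 2 * m + ((σ k e : Fin m) : ℕ)}
    ∀ k e k' e' : Fin m, (k, e) ≠ (k', e') →
      (T k e ∩ T k' e').card ≤ 1 ∧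
      ((T k e ∩ T k' e').Nonempty ∨
        ∃ a ∈ T k e, ∃ b ∈ T k e, ∃ c ∈ T k' e', ∃ d ∈ T k' e',
          a ≠ b ∧ c ≠ d ∧ chordCross a b c d) := by
  intro T k e k' e' hne
  have hpair : k = k' → e ≠ e' := fun hk he => hne (by rw [hk, he])
  refine ⟨card_inter_tripartiteTriangle_le_one k.isLt e.isLt k'.isLt e'.isLt ?_ ?_ ?_,
    tripartiteTriangle_inter_nonempty_or_cross k.isLt k'.isLt e.isLt e'.isLt⟩
  · exact fun hk he => hpair (Fin.ext hk) (Fin.ext he)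
  · intro hk hc
    obtain rfl := Fin.ext hk
    exact hpair rfl ((σ k).injective (Fin.ext hc))
  · intro he hc
    obtain rfl := Fin.ext he
    exact hpair ((hσ e _).unique rfl (Fin.ext hc).symm) rfl
end

section
/- For n divisible by 3, the complete geometric graph on n points in convex position admits a family of at least (n/3)² edge-disjoint triangles that pairwise intersect (share a vertex or have a pair of crossing edges); hence there exists a decomposition P of K^c_n with chromatic index χ'([K^c_n, P]) ≥ n²/9 - O(n). -/
open Finset

/-- Two parts of a decomposition of the complete convex geometric graph `K^c_n`
intersect: they share a vertex or have a pair of crossing edges. -/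
def ConvIntersects {n : ℕ} (p q : Finset (Fin n)) : Prop :=
  (p ∩ q).Nonempty ∨
    ∃ a ∈ p, ∃ b ∈ p, ∃ c ∈ q, ∃ d ∈ q, a ≠ b ∧ c ≠ d ∧
      chordCross (a : ℕ) (b : ℕ) (c : ℕ) (d : ℕ)

/-- `P` is a decomposition of `K_n` into cliques. -/
def IsCliqueDecomp (n : ℕ) (P : Finset (Finset (Fin n))) : Prop :=
  (∀ p ∈ P, 2 ≤ p.card) ∧
    ∀ i j : Fin n, i ≠ j → ∃! p, p ∈ P ∧ i ∈ p ∧ j ∈ p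

/-!
Split the `3m` points into three consecutive arcs of `m` points, each indexed by `ℤ/m`, and
for `a, b ∈ ℤ/m` take the triangle with vertex `a` on the first arc, `b` on the second and
`a + b` on the third. Any two vertices of such a triangle determine the third, so these `m²`
triangles are edge-disjoint. If `a < a'`, the side from `a` to the second arc crosses the side
from `a'` to the third arc, so any two of the triangles intersect. Adding every edge not yet
covered as a part of its own completes them to a decomposition of `K^c_n`, and in any proper
colouring of it the `m² = n²/9` triangles get distinct colours.
-/

lemma chordCross_of_lt {a b c d : ℕ} (hac : a < c) (hcb : c < b) (hd : d < a ∨ b < d) :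
    chordCross a b c d := by
  refine .inl ⟨?_, ?_⟩ <;> simp only [inside] <;> omega

section LinearFamilies

variable {α : Type*} [DecidableEq α]

theorem Finset.card_inter_le_one_of_not_subset {s e : Finset α} (he : #e = 2) (hs : ¬e ⊆ s) :
    #(s ∩ e) ≤ 1 := by
  by_contra! h
  exact hs <| inter_eq_right.mp <| eq_of_subset_of_card_le inter_subset_right (by omega)

theorem Finset.eq_of_mem_inter_of_mem_inter {p q : Finset α} {i j : α}
    (hpq : p ≠ q → #(p ∩ q) ≤ 1) (hij : i ≠ j) (hi : i ∈ p ∩ q) (hj : j ∈ p ∩ q) : p = q := by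
  by_contra hne
  exact (hpq hne).not_gt (one_lt_card.mpr ⟨i, hi, j, hj, hij⟩)

end LinearFamilies

theorem exists_isCliqueDecomp_superset {n : ℕ} {F : Finset (Finset (Fin n))}
    (hF₂ : ∀ t ∈ F, 2 ≤ #t) (hF : ∀ t ∈ F, ∀ t' ∈ F, t ≠ t' → #(t ∩ t') ≤ 1) :
    ∃ P, F ⊆ P ∧ IsCliqueDecomp n P := by
  set Q := (univ.powersetCard 2).filter fun e => ∀ t ∈ F, ¬e ⊆ t
  have hQ : ∀ e ∈ Q, #e = 2 ∧ ∀ t ∈ F, ¬e ⊆ t := by simp [Q]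
  have hlin : ∀ p ∈ F ∪ Q, ∀ q ∈ F ∪ Q, p ≠ q → #(p ∩ q) ≤ 1 := by
    intro p hp q hq hpq
    rcases mem_union.mp hp, mem_union.mp hq with ⟨hp | hp, hq | hq⟩
    · exact hF p hp q hq hpq
    · exact card_inter_le_one_of_not_subset (hQ q hq).1 ((hQ q hq).2 p hp)
    · rw [inter_comm]
      exact card_inter_le_one_of_not_subset (hQ p hp).1 ((hQ p hp).2 q hq)
    · refine card_inter_le_one_of_not_subset (hQ q hq).1 fun h => hpq ?_
      exact (eq_of_subset_of_card_le h (by rw [(hQ p hp).1, (hQ q hq).1])).symm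
  refine ⟨F ∪ Q, subset_union_left, fun p hp => ?_, fun i j hij => ?_⟩
  · rcases mem_union.mp hp with hp | hp
    exacts [hF₂ p hp, (hQ p hp).1.ge]
  obtain ⟨p, hp, hi, hj⟩ : ∃ p ∈ F ∪ Q, i ∈ p ∧ j ∈ p := by
    by_cases h : ∃ t ∈ F, i ∈ t ∧ j ∈ t
    · obtain ⟨t, ht, hi, hj⟩ := h
      exact ⟨t, mem_union_left _ ht, hi, hj⟩
    · refine ⟨{i, j}, mem_union_right _ ?_, by simp, by simp⟩
      simp only [Q, mem_filter, mem_powersetCard_univ, card_pair hij, insert_subset_iff,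
        singleton_subset_iff, true_and]
      exact fun t ht ⟨hi, hj⟩ => h ⟨t, ht, hi, hj⟩
  refine ⟨p, ⟨hp, hi, hj⟩, fun q ⟨hq, hi', hj'⟩ => ?_⟩
  exact eq_of_mem_inter_of_mem_inter (hlin q hq p hp) hij (mem_inter.mpr ⟨hi', hi⟩)
    (mem_inter.mpr ⟨hj', hj⟩)

theorem Finset.card_le_card_image_of_pairwise {β γ : Type*} [DecidableEq γ]
    {r : β → β → Prop} {F P : Finset β} (f : β → γ) (hFP : F ⊆ P)
    (hF : ∀ t ∈ F, ∀ t' ∈ F, t ≠ t' → r t t')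
    (hf : ∀ p ∈ P, ∀ q ∈ P, p ≠ q → r p q → f p ≠ f q) : #F ≤ #(P.image f) := by
  have hinj : Set.InjOn f F := fun t ht t' ht' hft => by
    by_contra hne
    exact hf t (hFP ht) t' (hFP ht') hne (hF t ht t' ht' hne) hft
  rw [← card_image_of_injOn hinj]
  exact card_le_card (image_subset_image hFP)

namespace ConvexTriangles

variable {m : ℕ}

def vertex (k : Fin 3) (x : Fin m) : Fin (3 * m) := finProdFinEquiv (k, x)

@[simp]
theorem val_vertex (k : Fin 3) (x : Fin m) : (vertex k x : ℕ) = x + m * k := rfl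

@[simp]
theorem vertex_inj {k k' : Fin 3} {x x' : Fin m} :
    vertex k x = vertex k' x' ↔ k = k' ∧ x = x' := by
  simp [vertex]

def triangle (a b : Fin m) : Finset (Fin (3 * m)) := {vertex 0 a, vertex 1 b, vertex 2 (a + b)}

theorem card_triangle (a b : Fin m) : #(triangle a b) = 3 :=
  card_eq_three.mpr ⟨_, _, _, by simp, by simp, by simp, rfl⟩

theorem mem_triangle_inter {a b a' b' : Fin m} {x : Fin (3 * m)} :
    x ∈ triangle a b ∩ triangle a' b' ↔
      x = vertex 0 a ∧ a = a' ∨ x = vertex 1 b ∧ b = b' ∨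
        x = vertex 2 (a + b) ∧ a + b = a' + b' := by
  simp only [triangle, mem_inter, mem_insert, mem_singleton]
  constructor
  · rintro ⟨h | h | h, h' | h' | h'⟩ <;> subst h <;> simp_all
  · rintro (⟨rfl, rfl⟩ | ⟨rfl, rfl⟩ | ⟨rfl, hab⟩) <;> simp [*]

theorem card_triangle_inter_le_one {a b a' b' : Fin m} (h : (a, b) ≠ (a', b')) :
    #(triangle a b ∩ triangle a' b') ≤ 1 := by
  by_contra! hcard
  obtain ⟨x, hx, y, hy, hxy⟩ := one_lt_card.mp hcard
  rw [mem_triangle_inter] at hx hy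
  apply h
  rcases hx with ⟨rfl, hx⟩ | ⟨rfl, hx⟩ | ⟨rfl, hx⟩ <;>
    rcases hy with ⟨rfl, hy⟩ | ⟨rfl, hy⟩ | ⟨rfl, hy⟩ <;> simp_all

theorem triangle_convIntersects (a b a' b' : Fin m) :
    ConvIntersects (triangle a b) (triangle a' b') := by
  rcases lt_trichotomy a a' with h | rfl | h
  · refine .inr ⟨vertex 0 a, by simp [triangle], vertex 1 b, by simp [triangle],
      vertex 0 a', by simp [triangle], vertex 2 (a' + b'), by simp [triangle], by simp, by simp,
      chordCross_of_lt ?_ ?_ (.inr ?_)⟩ <;> simp <;> grind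
  · exact .inl ⟨vertex 0 a, by simp [triangle]⟩
  · refine .inr ⟨vertex 0 a, by simp [triangle], vertex 2 (a + b), by simp [triangle],
      vertex 1 b', by simp [triangle], vertex 0 a', by simp [triangle], by simp, by simp,
      chordCross_of_lt ?_ ?_ (.inl ?_)⟩ <;> simp <;> grind

variable (m) in
def triangleFamily : Finset (Finset (Fin (3 * m))) :=
  univ.image fun p : Fin m × Fin m => triangle p.1 p.2

theorem mem_triangleFamily {t : Finset (Fin (3 * m))} :
    t ∈ triangleFamily m ↔ ∃ a b, triangle a b = t := by
  simp [triangleFamily]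

theorem card_of_mem_triangleFamily {t : Finset (Fin (3 * m))} (ht : t ∈ triangleFamily m) :
    #t = 3 := by
  obtain ⟨a, b, rfl⟩ := mem_triangleFamily.mp ht
  exact card_triangle a b

theorem card_inter_le_one_of_mem_triangleFamily {t t' : Finset (Fin (3 * m))}
    (ht : t ∈ triangleFamily m) (ht' : t' ∈ triangleFamily m) (hne : t ≠ t') :
    #(t ∩ t') ≤ 1 := by
  obtain ⟨a, b, rfl⟩ := mem_triangleFamily.mp ht
  obtain ⟨a', b', rfl⟩ := mem_triangleFamily.mp ht'
  exact card_triangle_inter_le_one fun h => hne (by simp_all)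

theorem convIntersects_of_mem_triangleFamily {t t' : Finset (Fin (3 * m))}
    (ht : t ∈ triangleFamily m) (ht' : t' ∈ triangleFamily m) : ConvIntersects t t' := by
  obtain ⟨a, b, rfl⟩ := mem_triangleFamily.mp ht
  obtain ⟨a', b', rfl⟩ := mem_triangleFamily.mp ht'
  exact triangle_convIntersects a b a' b'

theorem card_triangleFamily : #(triangleFamily m) = m ^ 2 := by
  rw [triangleFamily, card_image_of_injective, card_univ, Fintype.card_prod, Fintype.card_fin, sq]
  intro p q hpq
  by_contra hne
  have := card_triangle_inter_le_one hne
  rw [show triangle p.1 p.2 = triangle q.1 q.2 from hpq, inter_self, card_triangle] at this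
  omega

end ConvexTriangles

open ConvexTriangles in
/-- For `3 ∣ n`, `K^c_n` has a family of at least `(n/3)²` edge-disjoint,
pairwise intersecting triangles; hence some decomposition `P` of `K^c_n` has
chromatic index at least `n²/9 - O(n)`. -/
theorem stmt9 :
    ∃ C : ℝ, ∀ n : ℕ, 3 ∣ n →
      ∃ F : Finset (Finset (Fin n)),
        (∀ t ∈ F, t.card = 3) ∧
        (∀ t ∈ F, ∀ t' ∈ F, t ≠ t' → (t ∩ t').card ≤ 1) ∧
        (∀ t ∈ F, ∀ t' ∈ F, t ≠ t' → ConvIntersects t t') ∧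
        (n / 3) ^ 2 ≤ F.card ∧
        ∃ P : Finset (Finset (Fin n)), F ⊆ P ∧ IsCliqueDecomp n P ∧
          ∀ f : Finset (Fin n) → ℕ,
            (∀ p ∈ P, ∀ q ∈ P, p ≠ q → ConvIntersects p q → f p ≠ f q) →
            (n : ℝ) ^ 2 / 9 - C * n ≤ ((P.image f).card : ℝ) := by
  refine ⟨0, fun n ⟨m, hn⟩ => ?_⟩
  subst hn
  have hintersect : ∀ t ∈ triangleFamily m, ∀ t' ∈ triangleFamily m, t ≠ t' →
      ConvIntersects t t' := fun t ht t' ht' _ => convIntersects_of_mem_triangleFamily ht ht'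
  obtain ⟨P, hFP, hP⟩ := exists_isCliqueDecomp_superset
    (fun t ht => by rw [card_of_mem_triangleFamily ht]; omega)
    fun t ht t' ht' => card_inter_le_one_of_mem_triangleFamily ht ht'
  refine ⟨triangleFamily m, fun t => card_of_mem_triangleFamily,
    fun t ht t' ht' => card_inter_le_one_of_mem_triangleFamily ht ht', hintersect,
    by simp [card_triangleFamily], P, hFP, hP, fun f hf => ?_⟩
  have hcolors := card_le_card_image_of_pairwise f hFP hintersect hf
  rw [card_triangleFamily] at hcolors
  calc ((3 * m : ℕ) : ℝ) ^ 2 / 9 - 0 * (3 * m : ℕ) = (m ^ 2 : ℕ) := by push_cast; ring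
    _ ≤ #(P.image f) := by exact_mod_cast hcolors
end

section
/- Let n points lie in convex position and let P be a partition of the edges of the complete convex geometric graph into triangles. For a real x ≥ 3, call a triangle of P large if the length of its shortest edge is at least n/x. Then in any proper coloring of the decomposition (pairwise intersecting parts get distinct colors), each color class contains at most x - 2 large triangles. -/
/-!
The triangles of a colour class are pairwise vertex-disjoint and non-crossing. The edges of a
triangle `a < b < c` cut the remaining points into three arcs, and every other triangle of the
class lies inside one of them. Hence a class of `ℓ ≥ 1` triangles has `ℓ + 2` distinct arcs
containing no vertex of the class, and these arcs are pairwise disjoint. For large triangles every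
arc has at least `n/x - 1` points, so `3ℓ + (ℓ + 2)(n/x - 1) ≤ n`, which forces `ℓ ≤ x - 2`.
-/

open Finset

attribute [local instance] Classical.propDecidable

/-- `P` is a decomposition of `K_n` into triangles. -/
def IsTriDecomp (n : ℕ) (P : Finset (Finset (Fin n))) : Prop :=
  (∀ p ∈ P, p.card = 3) ∧
    ∀ i j : Fin n, i ≠ j → ∃! p, p ∈ P ∧ i ∈ p ∧ j ∈ p

def cyclen (n a b : ℕ) : ℕ := min (max a b - min a b) (n - (max a b - min a b))

/-- A triangle is large if its shortest edge has length at least `n/x`. -/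
def LargeTri (n : ℕ) (x : ℝ) (t : Finset (Fin n)) : Prop :=
  ∀ a ∈ t, ∀ b ∈ t, a ≠ b → (n : ℝ) / x ≤ (cyclen n (a : ℕ) (b : ℕ) : ℝ)

namespace TriangleArcs

variable {n : ℕ}

/-- The arc encoded by `(u, v, s)`: the open interval `(u, v)` if `s`, the points outside
`[u, v]` otherwise. Arcs are kept as such triples rather than as point sets because distinct
arcs may both be empty. -/
def arcSet (n : ℕ) (d : ℕ × ℕ × Bool) : Finset (Fin n) :=
  univ.filter fun y => if d.2.2 then d.1 < y.val ∧ y.val < d.2.1 else y.val < d.1 ∨ d.2.1 < y.val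

@[simp]
lemma mem_arcSet_true {y : Fin n} {u v : ℕ} :
    y ∈ arcSet n (u, v, true) ↔ u < y.val ∧ y.val < v := by
  simp [arcSet]

@[simp]
lemma mem_arcSet_false {y : Fin n} {u v : ℕ} :
    y ∈ arcSet n (u, v, false) ↔ y.val < u ∨ v < y.val := by
  simp [arcSet]

lemma card_arcSet_true {u v : ℕ} (hv : v ≤ n) : (arcSet n (u, v, true)).card = v - u - 1 := by
  have : (arcSet n (u, v, true)).map Fin.valEmbedding = Ioo u v := by
    ext z
    simp only [mem_map, mem_arcSet_true, Fin.valEmbedding_apply, mem_Ioo]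
    exact ⟨by rintro ⟨y, hy, rfl⟩; exact hy, fun hz => ⟨⟨z, by omega⟩, hz, rfl⟩⟩
  rw [← card_map, this, Nat.card_Ioo]

lemma card_arcSet_false {u v : ℕ} (huv : u < v) (hv : v < n) :
    (arcSet n (u, v, false)).card = u + (n - v - 1) := by
  have : (arcSet n (u, v, false)).map Fin.valEmbedding = range u ∪ Ioo v n := by
    ext z
    simp only [mem_map, mem_arcSet_false, Fin.valEmbedding_apply, mem_union, mem_range, mem_Ioo]
    exact ⟨by rintro ⟨y, hy, rfl⟩; omega, fun hz => ⟨⟨z, by omega⟩, by simp; omega, rfl⟩⟩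
  rw [← card_map, this, card_union_of_disjoint, card_range, Nat.card_Ioo]
  exact disjoint_left.2 fun z hz hz' => by simp only [mem_range, mem_Ioo] at hz hz'; omega

def IsArc (t : Finset (Fin n)) (d : ℕ × ℕ × Bool) : Prop :=
  ∃ a b c : Fin n, a.val < b.val ∧ b.val < c.val ∧ t = {a, b, c} ∧
    (d = (a.val, b.val, true) ∨ d = (b.val, c.val, true) ∨ d = (a.val, c.val, false))

def IsEmptyArc (S : Finset (Finset (Fin n))) (d : ℕ × ℕ × Bool) : Prop :=
  ∀ t ∈ S, ∀ v ∈ t, v ∉ arcSet n d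

def IsEmptyArcFamily (S : Finset (Finset (Fin n))) (𝒜 : Finset (ℕ × ℕ × Bool)) : Prop :=
  ∀ d ∈ 𝒜, (∃ t ∈ S, IsArc t d) ∧ IsEmptyArc S d

lemma disjoint_of_not_convIntersects {p q : Finset (Fin n)} (h : ¬ConvIntersects p q) :
    Disjoint p q := by
  by_contra hpq
  exact h (Or.inl (not_disjoint_iff_nonempty_inter.mp hpq))

lemma exists_sorted_triple {t : Finset (Fin n)} (h : t.card = 3) :
    ∃ a b c : Fin n, a.val < b.val ∧ b.val < c.val ∧ t = {a, b, c} := by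
  set e := t.orderEmbOfFin h
  refine ⟨e 0, e 1, e 2, e.strictMono (by decide), e.strictMono (by decide), ?_⟩
  conv_lhs => rw [← t.image_orderEmbOfFin_univ h]
  ext v
  simp only [mem_image, mem_univ, true_and, Fin.exists_fin_succ, Fin.exists_fin_zero,
    mem_insert, mem_singleton]
  simp [e, eq_comm]

lemma sorted_triple_unique {a b c a' b' c' : Fin n}
    (hab : a.val < b.val) (hbc : b.val < c.val) (hab' : a'.val < b'.val) (hbc' : b'.val < c'.val)
    (h : ({a, b, c} : Finset (Fin n)) = {a', b', c'}) :
    a.val = a'.val ∧ b.val = b'.val ∧ c.val = c'.val := by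
  have ha' : a' ∈ ({a, b, c} : Finset (Fin n)) := h ▸ by simp
  have hb' : b' ∈ ({a, b, c} : Finset (Fin n)) := h ▸ by simp
  have hc' : c' ∈ ({a, b, c} : Finset (Fin n)) := h ▸ by simp
  simp only [mem_insert, mem_singleton, Fin.ext_iff] at ha' hb' hc'
  omega

lemma IsArc.notMem_arcSet {t : Finset (Fin n)} {d : ℕ × ℕ × Bool} (hd : IsArc t d)
    {v : Fin n} (hv : v ∈ t) : v ∉ arcSet n d := by
  obtain ⟨a, b, c, hab, hbc, rfl, hd⟩ := hd
  simp only [mem_insert, mem_singleton] at hv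
  rcases hd with rfl | rfl | rfl <;> rcases hv with rfl | rfl | rfl <;> simp <;> omega

/-- Laminarity: a chord of `t` cannot separate two vertices of a triangle that does not
intersect `t`. -/
lemma IsArc.subset_arcSet_of_mem {t t' : Finset (Fin n)} {d : ℕ × ℕ × Bool} (hd : IsArc t d)
    (htt' : ¬ConvIntersects t t') {v : Fin n} (hv : v ∈ t') (hvd : v ∈ arcSet n d) :
    t' ⊆ arcSet n d := by
  intro w hw
  by_contra hwd
  have hvw : v ≠ w := by rintro rfl; exact hwd hvd
  have hwt : w ∉ t := disjoint_right.1 (disjoint_of_not_convIntersects htt') hw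
  obtain ⟨a, b, c, hab, hbc, rfl, hd⟩ := hd
  simp only [mem_insert, mem_singleton, Fin.ext_iff, not_or] at hwt
  refine htt' (Or.inr ?_)
  rcases hd with rfl | rfl | rfl <;> simp only [mem_arcSet_true, mem_arcSet_false] at hvd hwd
  · refine ⟨a, by simp, b, by simp, v, hv, w, hw, by simp [Fin.ext_iff]; omega, hvw,
      xor_def.2 (by simp only [inside]; omega)⟩
  · refine ⟨b, by simp, c, by simp, v, hv, w, hw, by simp [Fin.ext_iff]; omega, hvw,
      xor_def.2 (by simp only [inside]; omega)⟩
  · refine ⟨a, by simp, c, by simp, v, hv, w, hw, by simp [Fin.ext_iff]; omega, hvw,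
      xor_def.2 (by simp only [inside]; omega)⟩

lemma IsArc.ne_of_disjoint {t t' : Finset (Fin n)} {d d' : ℕ × ℕ × Bool}
    (hd : IsArc t d) (hd' : IsArc t' d') (htt' : Disjoint t t') : d ≠ d' := by
  obtain ⟨a, b, c, hab, hbc, rfl, hd⟩ := hd
  obtain ⟨a', b', c', hab', hbc', rfl, hd'⟩ := hd'
  have ha := disjoint_left.1 htt' (mem_insert_self a _)
  have hb := disjoint_left.1 htt' (mem_insert_of_mem (mem_insert_self b _))
  simp only [mem_insert, mem_singleton, Fin.ext_iff, not_or] at ha hb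
  rcases hd with rfl | rfl | rfl <;> rcases hd' with rfl | rfl | rfl <;> simp <;> omega

lemma exists_two_arcs_subset {t : Finset (Fin n)} (ht : t.card = 3) {d : ℕ × ℕ × Bool}
    (hsub : t ⊆ arcSet n d) :
    ∃ d₁ d₂, d₁ ≠ d₂ ∧ IsArc t d₁ ∧ IsArc t d₂ ∧ arcSet n d₁ ⊆ arcSet n d ∧
      arcSet n d₂ ⊆ arcSet n d := by
  obtain ⟨a, b, c, hab, hbc, rfl⟩ := exists_sorted_triple ht
  have harc : ∀ d', (d' = (a.val, b.val, true) ∨ d' = (b.val, c.val, true) ∨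
      d' = (a.val, c.val, false)) → IsArc {a, b, c} d' := fun d' h => ⟨a, b, c, hab, hbc, rfl, h⟩
  have ha := hsub (by simp : a ∈ _)
  have hb := hsub (by simp : b ∈ _)
  have hc := hsub (by simp : c ∈ _)
  obtain ⟨u, v, _ | _⟩ := d <;> simp only [mem_arcSet_true, mem_arcSet_false] at ha hb hc
  · by_cases h₁ : c.val < u ∨ v < a.val
    · refine ⟨_, _, ?_, harc _ (Or.inl rfl), harc _ (Or.inr (Or.inl rfl)), ?_, ?_⟩ <;>
        first | (simp; omega) | (intro y; simp; omega)
    by_cases h₂ : b.val < u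
    · refine ⟨_, _, ?_, harc _ (Or.inl rfl), harc _ (Or.inr (Or.inr rfl)), ?_, ?_⟩ <;>
        first | simp | (intro y; simp; omega)
    · refine ⟨_, _, ?_, harc _ (Or.inr (Or.inl rfl)), harc _ (Or.inr (Or.inr rfl)), ?_, ?_⟩ <;>
        first | simp | (intro y; simp; omega)
  · refine ⟨_, _, ?_, harc _ (Or.inl rfl), harc _ (Or.inr (Or.inl rfl)), ?_, ?_⟩ <;>
      first | (simp; omega) | (intro y; simp; omega)

lemma disjoint_arcSet_of_isArc_same {t : Finset (Fin n)} {d d' : ℕ × ℕ × Bool}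
    (hd : IsArc t d) (hd' : IsArc t d') (hne : d ≠ d') : Disjoint (arcSet n d) (arcSet n d') := by
  obtain ⟨a, b, c, hab, hbc, ht, hd⟩ := hd
  obtain ⟨a', b', c', hab', hbc', ht', hd'⟩ := hd'
  obtain ⟨ha, hb, hc⟩ := sorted_triple_unique hab hbc hab' hbc' (ht.symm.trans ht')
  refine disjoint_left.2 fun y hy hy' => ?_
  rcases hd with rfl | rfl | rfl <;> rcases hd' with rfl | rfl | rfl <;>
    first
      | (apply hne; simp only [Prod.mk.injEq, and_true]; omega)
      | (simp only [mem_arcSet_true, mem_arcSet_false] at hy hy'; omega)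

lemma disjoint_arcSet_of_isArc_disjoint {t t' : Finset (Fin n)} {d d' : ℕ × ℕ × Bool}
    (hd : IsArc t d) (hd' : IsArc t' d') (htt' : Disjoint t t')
    (ht'd : ∀ v ∈ t', v ∉ arcSet n d) (htd' : ∀ v ∈ t, v ∉ arcSet n d') :
    Disjoint (arcSet n d) (arcSet n d') := by
  obtain ⟨a, b, c, hab, hbc, rfl, hd⟩ := hd
  obtain ⟨a', b', c', hab', hbc', rfl, hd'⟩ := hd'
  have hne : ∀ v ∈ ({a, b, c} : Finset (Fin n)), ∀ v' ∈ ({a', b', c'} : Finset (Fin n)),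
      v.val ≠ v'.val := fun v hv v' hv' h => disjoint_left.1 htt' hv (Fin.ext h ▸ hv')
  simp only [mem_insert, mem_singleton, forall_eq_or_imp, forall_eq] at hne ht'd htd'
  refine disjoint_left.2 fun y hy hy' => ?_
  rcases hd with rfl | rfl | rfl <;> rcases hd' with rfl | rfl | rfl <;>
    simp only [mem_arcSet_true, mem_arcSet_false, not_and_or, not_or, not_lt]
      at hy hy' ht'd htd' <;>
    omega

lemma exists_isArc_isEmptyArc {S : Finset (Finset (Fin n))} (hS3 : ∀ t ∈ S, t.card = 3)
    (hS : (S : Set (Finset (Fin n))).Pairwise fun p q => ¬ConvIntersects p q) (hne : S.Nonempty) :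
    ∃ t ∈ S, ∃ d, IsArc t d ∧ IsEmptyArc S d := by
  have hex : ∃ k, ∃ t ∈ S, ∃ d, IsArc t d ∧ (arcSet n d).card = k := by
    obtain ⟨t, ht⟩ := hne
    obtain ⟨a, b, c, hab, hbc, rfl⟩ := exists_sorted_triple (hS3 t ht)
    exact ⟨_, _, ht, _, ⟨a, b, c, hab, hbc, rfl, Or.inl rfl⟩, rfl⟩
  -- an arc with the fewest points is empty: a triangle inside it would have a smaller arc
  obtain ⟨t, ht, d, hd, hk⟩ := Nat.find_spec hex
  refine ⟨t, ht, d, hd, fun t' ht' v hv hvd => ?_⟩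
  have htt' : t ≠ t' := by rintro rfl; exact hd.notMem_arcSet hv hvd
  have hsub := hd.subset_arcSet_of_mem (hS ht ht' htt') hv hvd
  obtain ⟨d', -, -, hd', -, hsub', -⟩ := exists_two_arcs_subset (hS3 t' ht') hsub
  have hlt : (arcSet n d').card < (arcSet n d).card :=
    card_lt_card ((ssubset_iff_of_subset hsub').2 ⟨v, hvd, hd'.notMem_arcSet hv⟩)
  exact Nat.find_min hex (hk ▸ hlt) ⟨t', ht', d', hd', rfl⟩

lemma isEmptyArcFamily_singleton {t : Finset (Fin n)} (ht : t.card = 3) :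
    ∃ 𝒜, 𝒜.card = 3 ∧ IsEmptyArcFamily {t} 𝒜 := by
  obtain ⟨a, b, c, hab, hbc, rfl⟩ := exists_sorted_triple ht
  refine ⟨{(a.val, b.val, true), (b.val, c.val, true), (a.val, c.val, false)}, ?_, ?_⟩
  · rw [card_insert_of_notMem (by simp; omega), card_pair (by simp)]
  · intro d hd
    have hd : IsArc {a, b, c} d := ⟨a, b, c, hab, hbc, rfl, by simpa using hd⟩
    exact ⟨⟨_, mem_singleton_self _, hd⟩,
      fun t ht v hv => hd.notMem_arcSet (mem_singleton.1 ht ▸ hv)⟩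

lemma IsEmptyArcFamily.pairwiseDisjoint {S : Finset (Finset (Fin n))}
    (hS : (S : Set (Finset (Fin n))).Pairwise fun p q => ¬ConvIntersects p q)
    {𝒜 : Finset (ℕ × ℕ × Bool)} (h𝒜 : IsEmptyArcFamily S 𝒜) :
    (𝒜 : Set (ℕ × ℕ × Bool)).PairwiseDisjoint (arcSet n) := by
  intro d hd d' hd' hne
  obtain ⟨⟨t, ht, htd⟩, hdS⟩ := h𝒜 d hd
  obtain ⟨⟨t', ht', htd'⟩, hd'S⟩ := h𝒜 d' hd'
  by_cases htt' : t = t'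
  · exact disjoint_arcSet_of_isArc_same htd (htt' ▸ htd') hne
  · exact disjoint_arcSet_of_isArc_disjoint htd htd'
      (disjoint_of_not_convIntersects (hS ht ht' htt')) (hdS t' ht') (hd'S t ht)

section Erase

variable {S : Finset (Finset (Fin n))} {t₀ : Finset (Fin n)} {𝒜 : Finset (ℕ × ℕ × Bool)}

lemma IsEmptyArc.of_erase {d : ℕ × ℕ × Bool} (hd : IsEmptyArc (S.erase t₀) d)
    (ht₀ : ∀ v ∈ t₀, v ∉ arcSet n d) : IsEmptyArc S d := by
  intro t ht
  by_cases h : t = t₀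
  · exact h ▸ ht₀
  · exact hd t (mem_erase.2 ⟨h, ht⟩)

lemma IsEmptyArcFamily.subset_arcSet_of_mem
    (hS : (S : Set (Finset (Fin n))).Pairwise fun p q => ¬ConvIntersects p q) (ht₀ : t₀ ∈ S)
    (h𝒜 : IsEmptyArcFamily (S.erase t₀) 𝒜) {d : ℕ × ℕ × Bool} (hd : d ∈ 𝒜) {v : Fin n}
    (hv : v ∈ t₀) (hvd : v ∈ arcSet n d) : t₀ ⊆ arcSet n d := by
  obtain ⟨⟨t, ht, htd⟩, -⟩ := h𝒜 d hd
  obtain ⟨htt₀, htS⟩ := mem_erase.1 ht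
  exact htd.subset_arcSet_of_mem (hS htS ht₀ htt₀) hv hvd

lemma IsEmptyArcFamily.notMem_of_isArc
    (hS : (S : Set (Finset (Fin n))).Pairwise fun p q => ¬ConvIntersects p q) (ht₀ : t₀ ∈ S)
    (h𝒜 : IsEmptyArcFamily (S.erase t₀) 𝒜) {d₀ : ℕ × ℕ × Bool} (hd₀ : IsArc t₀ d₀) : d₀ ∉ 𝒜 := by
  intro hd₀𝒜
  obtain ⟨⟨t, ht, htd⟩, -⟩ := h𝒜 d₀ hd₀𝒜
  obtain ⟨htt₀, htS⟩ := mem_erase.1 ht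
  exact hd₀.ne_of_disjoint htd (disjoint_of_not_convIntersects (hS ht₀ htS (Ne.symm htt₀))) rfl

lemma IsEmptyArcFamily.exists_of_subset_arcSet (hS3 : ∀ t ∈ S, t.card = 3)
    (hS : (S : Set (Finset (Fin n))).Pairwise fun p q => ¬ConvIntersects p q) (ht₀ : t₀ ∈ S)
    (h𝒜 : IsEmptyArcFamily (S.erase t₀) 𝒜) {d' : ℕ × ℕ × Bool} (hd' : d' ∈ 𝒜)
    (hsub : t₀ ⊆ arcSet n d') : ∃ ℬ, ℬ.card = 𝒜.card + 1 ∧ IsEmptyArcFamily S ℬ := by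
  obtain ⟨d₁, d₂, h₁₂, hd₁, hd₂, hsub₁, hsub₂⟩ := exists_two_arcs_subset (hS3 t₀ ht₀) hsub
  have hnew : ∀ {d}, IsArc t₀ d → arcSet n d ⊆ arcSet n d' → IsEmptyArc S d :=
    fun hd hdd' => IsEmptyArc.of_erase (fun t ht v hv hvd => (h𝒜 d' hd').2 t ht v hv (hdd' hvd))
      fun v hv => hd.notMem_arcSet hv
  have hold : ∀ d ∈ 𝒜.erase d', ∀ v ∈ t₀, v ∉ arcSet n d := by
    intro d hd v hv hvd
    obtain ⟨hdd', hd𝒜⟩ := mem_erase.1 hd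
    have hpair := h𝒜.pairwiseDisjoint (hS.mono (coe_subset.2 (erase_subset t₀ S))) hd𝒜 hd' hdd'
    exact disjoint_left.1 hpair (h𝒜.subset_arcSet_of_mem hS ht₀ hd𝒜 hv hvd hv) (hsub hv)
  have hd₂𝒜 : d₂ ∉ 𝒜.erase d' := fun h => h𝒜.notMem_of_isArc hS ht₀ hd₂ (mem_of_mem_erase h)
  have hd₁𝒜 : d₁ ∉ insert d₂ (𝒜.erase d') := by
    rw [mem_insert, not_or]
    exact ⟨h₁₂, fun h => h𝒜.notMem_of_isArc hS ht₀ hd₁ (mem_of_mem_erase h)⟩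
  refine ⟨insert d₁ (insert d₂ (𝒜.erase d')), ?_, ?_⟩
  · rw [card_insert_of_notMem hd₁𝒜, card_insert_of_notMem hd₂𝒜, card_erase_of_mem hd']
    have := card_pos.2 ⟨d', hd'⟩
    omega
  · intro d hd
    rcases mem_insert.1 hd with rfl | hd
    · exact ⟨⟨t₀, ht₀, hd₁⟩, hnew hd₁ hsub₁⟩
    rcases mem_insert.1 hd with rfl | hd
    · exact ⟨⟨t₀, ht₀, hd₂⟩, hnew hd₂ hsub₂⟩
    obtain ⟨⟨t, ht, htd⟩, hdS⟩ := h𝒜 d (mem_of_mem_erase hd)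
    exact ⟨⟨t, mem_of_mem_erase ht, htd⟩, hdS.of_erase (hold d hd)⟩

lemma IsEmptyArcFamily.insert
    (hS : (S : Set (Finset (Fin n))).Pairwise fun p q => ¬ConvIntersects p q) (ht₀ : t₀ ∈ S)
    (h𝒜 : IsEmptyArcFamily (S.erase t₀) 𝒜) {d₀ : ℕ × ℕ × Bool} (hd₀ : IsArc t₀ d₀)
    (hd₀S : IsEmptyArc S d₀) (hout : ∀ d ∈ 𝒜, ∀ v ∈ t₀, v ∉ arcSet n d) :
    (insert d₀ 𝒜).card = 𝒜.card + 1 ∧ IsEmptyArcFamily S (insert d₀ 𝒜) := by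
  refine ⟨card_insert_of_notMem (h𝒜.notMem_of_isArc hS ht₀ hd₀), fun d hd => ?_⟩
  rcases mem_insert.1 hd with rfl | hd
  · exact ⟨⟨t₀, ht₀, hd₀⟩, hd₀S⟩
  obtain ⟨⟨t, ht, htd⟩, hdS⟩ := h𝒜 d hd
  exact ⟨⟨t, mem_of_mem_erase ht, htd⟩, hdS.of_erase (hout d hd)⟩

end Erase

/-- Remove a triangle `t₀` with an empty arc: if an empty arc of the remaining class contains
`t₀`, two arcs of `t₀` replace it, otherwise the empty arc of `t₀` is added. -/
theorem exists_isEmptyArcFamily {S : Finset (Finset (Fin n))} (hS3 : ∀ t ∈ S, t.card = 3)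
    (hS : (S : Set (Finset (Fin n))).Pairwise fun p q => ¬ConvIntersects p q) (hne : S.Nonempty) :
    ∃ 𝒜, 𝒜.card = S.card + 2 ∧ IsEmptyArcFamily S 𝒜 := by
  induction S using Finset.strongInduction with
  | H S ih =>
  obtain ⟨t₀, ht₀, d₀, hd₀, hd₀S⟩ := exists_isArc_isEmptyArc hS3 hS hne
  rcases (S.erase t₀).eq_empty_or_nonempty with hS₀ | hS₀
  · obtain rfl : S = {t₀} := (erase_eq_empty_iff S t₀).1 hS₀ |>.resolve_left hne.ne_empty
    exact isEmptyArcFamily_singleton (hS3 t₀ ht₀)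
  obtain ⟨𝒜, h𝒜card, h𝒜⟩ := ih _ (erase_ssubset ht₀) (fun t ht => hS3 t (mem_of_mem_erase ht))
    (hS.mono (coe_subset.2 (erase_subset t₀ S))) hS₀
  rw [card_erase_of_mem ht₀] at h𝒜card
  have hcard := card_pos.2 hne
  by_cases hin : ∃ d ∈ 𝒜, ∃ v ∈ t₀, v ∈ arcSet n d
  · obtain ⟨d, hd, v, hv, hvd⟩ := hin
    obtain ⟨ℬ, hℬcard, hℬ⟩ := h𝒜.exists_of_subset_arcSet hS3 hS ht₀ hd
      (h𝒜.subset_arcSet_of_mem hS ht₀ hd hv hvd)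
    exact ⟨ℬ, by omega, hℬ⟩
  · push Not at hin
    obtain ⟨hℬcard, hℬ⟩ := h𝒜.insert hS ht₀ hd₀ hd₀S hin
    exact ⟨_, by omega, hℬ⟩

lemma three_mul_card_add_sum_card_arcSet_le {S : Finset (Finset (Fin n))}
    (hS3 : ∀ t ∈ S, t.card = 3)
    (hS : (S : Set (Finset (Fin n))).Pairwise fun p q => ¬ConvIntersects p q)
    {𝒜 : Finset (ℕ × ℕ × Bool)} (h𝒜 : IsEmptyArcFamily S 𝒜) :
    3 * S.card + ∑ d ∈ 𝒜, (arcSet n d).card ≤ n := by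
  have hSdisj : (S : Set (Finset (Fin n))).PairwiseDisjoint id :=
    fun p hp q hq hpq => disjoint_of_not_convIntersects (hS hp hq hpq)
  have hdisj : Disjoint (S.biUnion id) (𝒜.biUnion (arcSet n)) := by
    rw [disjoint_biUnion_left]
    intro t ht
    rw [disjoint_biUnion_right]
    exact fun d hd => disjoint_left.2 fun v hv => (h𝒜 d hd).2 t ht v hv
  calc 3 * S.card + ∑ d ∈ 𝒜, (arcSet n d).card
      = (S.biUnion id ∪ 𝒜.biUnion (arcSet n)).card := by
        rw [card_union_of_disjoint hdisj, card_biUnion hSdisj,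
          card_biUnion (h𝒜.pairwiseDisjoint hS)]
        simp only [id, sum_congr rfl hS3, sum_const, smul_eq_mul, mul_comm]
    _ ≤ n := (card_le_univ _).trans_eq (Fintype.card_fin n)

end TriangleArcs

open TriangleArcs

lemma LargeTri.div_le_card_arcSet_add_one {n : ℕ} {x : ℝ} {t : Finset (Fin n)}
    (ht : LargeTri n x t) {d : ℕ × ℕ × Bool} (hd : IsArc t d) :
    (n : ℝ) / x ≤ (arcSet n d).card + 1 := by
  obtain ⟨a, b, c, hab, hbc, rfl, hd⟩ := hd
  have hlen : ∀ p ∈ ({a, b, c} : Finset (Fin n)), ∀ q ∈ ({a, b, c} : Finset (Fin n)),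
      p.val < q.val → (n : ℝ) / x ≤ (min (q.val - p.val) (n - (q.val - p.val)) : ℕ) := by
    intro p hp q hq hpq
    have h := ht p hp q hq (Fin.ne_of_lt hpq)
    rwa [cyclen, max_eq_right hpq.le, min_eq_left hpq.le] at h
  rcases hd with rfl | rfl | rfl
  · refine (hlen a (by simp) b (by simp) hab).trans ?_
    rw [card_arcSet_true b.isLt.le]
    exact_mod_cast (by omega)
  · refine (hlen b (by simp) c (by simp) hbc).trans ?_
    rw [card_arcSet_true c.isLt.le]
    exact_mod_cast (by omega)
  · refine (hlen a (by simp) c (by simp) (hab.trans hbc)).trans ?_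
    rw [card_arcSet_false (hab.trans hbc) c.isLt]
    exact_mod_cast (by omega)

lemma le_sub_two_of_three_mul_add_le {ℓ n : ℕ} {x : ℝ} (hx : 0 < x) (hℓ : 1 ≤ ℓ)
    (hn : 0 < n) (h : 3 * ℓ + (ℓ + 2) * ((n : ℝ) / x - 1) ≤ n) : (ℓ : ℝ) ≤ x - 2 := by
  have hℓ' : (1 : ℝ) ≤ ℓ := by exact_mod_cast hℓ
  have hn' : (0 : ℝ) < n := by exact_mod_cast hn
  have hmul : (ℓ + 2) * ((n : ℝ) / x - 1) * x = (ℓ + 2) * (n - x) := by field_simp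
  nlinarith [mul_le_mul_of_nonneg_right h hx.le]

lemma three_mul_card_add_mul_le_of_largeTri {n : ℕ} {x : ℝ} {S : Finset (Finset (Fin n))}
    (hS3 : ∀ t ∈ S, t.card = 3)
    (hS : (S : Set (Finset (Fin n))).Pairwise fun p q => ¬ConvIntersects p q)
    (hlarge : ∀ t ∈ S, LargeTri n x t) (hne : S.Nonempty) :
    3 * S.card + (S.card + 2) * ((n : ℝ) / x - 1) ≤ n := by
  obtain ⟨𝒜, h𝒜card, h𝒜⟩ := exists_isEmptyArcFamily hS3 hS hne
  have hcount : (3 * S.card : ℝ) + ∑ d ∈ 𝒜, ((arcSet n d).card : ℝ) ≤ n := by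
    exact_mod_cast three_mul_card_add_sum_card_arcSet_le hS3 hS h𝒜
  have hsum : 𝒜.card • ((n : ℝ) / x - 1) ≤ ∑ d ∈ 𝒜, ((arcSet n d).card : ℝ) := by
    refine card_nsmul_le_sum _ _ _ fun d hd => ?_
    obtain ⟨⟨t, ht, htd⟩, -⟩ := h𝒜 d hd
    linarith [(hlarge t ht).div_le_card_arcSet_add_one htd]
  rw [nsmul_eq_mul, h𝒜card] at hsum
  push_cast at hsum
  linarith

/-- In any proper coloring of a decomposition of `K^c_n` into triangles, each
color class contains at most `x - 2` large triangles, for any `x ≥ 3`. -/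
theorem stmt11 (n : ℕ) (x : ℝ) (hx : 3 ≤ x)
    (P : Finset (Finset (Fin n))) (hP : IsTriDecomp n P)
    (f : Finset (Fin n) → ℕ)
    (hf : ∀ p ∈ P, ∀ q ∈ P, p ≠ q → ConvIntersects p q → f p ≠ f q) :
    ∀ col : ℕ,
      ((P.filter (fun t => f t = col ∧ LargeTri n x t)).card : ℝ) ≤ x - 2 := by
  intro col
  set S := P.filter (fun t => f t = col ∧ LargeTri n x t)
  have hS3 : ∀ t ∈ S, t.card = 3 := fun t ht => hP.1 t (mem_filter.1 ht).1
  have hS : (S : Set (Finset (Fin n))).Pairwise fun p q => ¬ConvIntersects p q := by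
    intro p hp q hq hpq hpq'
    obtain ⟨hpP, hpc, -⟩ := mem_filter.1 hp
    obtain ⟨hqP, hqc, -⟩ := mem_filter.1 hq
    exact hf p hpP q hqP hpq hpq' (hpc.trans hqc.symm)
  rcases S.eq_empty_or_nonempty with hS₀ | hne
  · rw [hS₀, card_empty, Nat.cast_zero]
    linarith
  obtain ⟨t, ht⟩ := hne
  obtain ⟨v, -⟩ := card_pos.1 (by rw [hS3 t ht]; norm_num : 0 < t.card)
  exact le_sub_two_of_three_mul_add_le (by linarith) (card_pos.2 ⟨t, ht⟩) v.pos
    (three_mul_card_add_mul_le_of_largeTri hS3 hS (fun t ht => (mem_filter.1 ht).2.2) ⟨t, ht⟩)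
end

section
/- Let n points lie in convex position and let P be a partition of the edges of the complete convex geometric graph into triangles. Then the chromatic index of the decomposition satisfies χ'([K^c_n, P]) ≥ (binom(n,2)/3 - n²/x)/(x-2) for every x ≥ 3, and choosing x = 2(3+√6) gives χ'([K^c_n, P]) ≥ n²/(60 + 24√6) - O(n) > n²/119 - O(n). -/
open Finset

/-!
Label the points `0, …, n - 1` in cyclic order. A triangle `a < b < c` cuts the circle into three
arcs, and its shortest side, in cyclic distance, is as long as its shortest arc. Triangles of one
colour neither share a vertex nor cross, so each lies inside a single arc of every other one. A
nested family of `k` triangles has at least `k + 2` arcs that contain no other triangle: an ear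
(a triangle with all the others inside one of its arcs) exists, and removing it costs at most one
such free arc while its two other arcs are free. Free arcs are pairwise disjoint, so if every arc
has more than `n / x` points then `k + 2 < x`. Finally, a triangle with an arc of length `d ≤ n / x`
is determined by the start of that arc and `d`, so there are at most `n² / x` short triangles.
-/

@[ext]
structure Triangle (n : ℕ) where
  a : ℕ
  b : ℕ
  c : ℕ
  a_lt_b : a < b
  b_lt_c : b < c
  c_lt : c < n

namespace Triangle
variable {n : ℕ}

instance : DecidableEq (Triangle n) := fun s t =>
  decidable_of_iff (s.a = t.a ∧ s.b = t.b ∧ s.c = t.c) Triangle.ext_iff.symm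

instance : Membership ℕ (Triangle n) := ⟨fun t v => v = t.a ∨ v = t.b ∨ v = t.c⟩

theorem mem_iff {t : Triangle n} {v : ℕ} : v ∈ t ↔ v = t.a ∨ v = t.b ∨ v = t.c := Iff.rfl

theorem a_mem (t : Triangle n) : t.a ∈ t := Or.inl rfl
theorem b_mem (t : Triangle n) : t.b ∈ t := Or.inr (Or.inl rfl)
theorem c_mem (t : Triangle n) : t.c ∈ t := Or.inr (Or.inr rfl)

theorem forall_mem_iff {t : Triangle n} {P : ℕ → Prop} :
    (∀ v ∈ t, P v) ↔ P t.a ∧ P t.b ∧ P t.c := by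
  simp only [mem_iff, forall_eq_or_imp, forall_eq]

/-- Arc `r` lies strictly between the `r`-th and the `(r + 1)`-th vertex in cyclic order; arc `2`
wraps around through `n - 1` and `0`. -/
def InArc (t : Triangle n) : Fin 3 → ℕ → Prop
  | 0, q => t.a < q ∧ q < t.b
  | 1, q => t.b < q ∧ q < t.c
  | 2, q => q < t.a ∨ t.c < q

def InsideArc (s t : Triangle n) (r : Fin 3) : Prop := ∀ v ∈ s, t.InArc r v

variable {s t : Triangle n} {r r' : Fin 3} {q : ℕ}

theorem inArc_unique (h : t.InArc r q) (h' : t.InArc r' q) : r = r' := by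
  have := t.a_lt_b; have := t.b_lt_c
  fin_cases r <;> fin_cases r' <;> simp only [InArc] at h h' <;> first | rfl | omega

theorem not_inArc_of_mem (hq : q ∈ t) : ¬ t.InArc r q := by
  have := t.a_lt_b; have := t.b_lt_c
  rw [mem_iff] at hq
  fin_cases r <;> simp only [InArc] <;> omega

theorem exists_inArc (hq : q ∉ t) : ∃ r, t.InArc r q := by
  rw [mem_iff] at hq
  by_cases h0 : t.a < q ∧ q < t.b
  · exact ⟨0, h0⟩
  by_cases h1 : t.b < q ∧ q < t.c
  · exact ⟨1, h1⟩
  exact ⟨2, show q < t.a ∨ t.c < q by omega⟩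

theorem exists_insideArc_of_not_chordCross (hd : ∀ v ∈ s, v ∉ t)
    (hcross : ∀ u ∈ t, ∀ v ∈ t, ∀ p ∈ s, ∀ q ∈ s, u < v → p < q → ¬ chordCross u v p q) :
    ∃ r, s.InsideArc t r := by
  have := s.a_lt_b; have := s.b_lt_c; have := t.a_lt_b; have := t.b_lt_c
  -- it suffices that the sides of `s` at `s.a` cross no side of `t`
  have hside := fun u (hu : u ∈ t) v (hv : v ∈ t) (huv : u < v) =>
    And.intro (hcross u hu v hv _ s.a_mem _ s.b_mem huv s.a_lt_b)
      (hcross u hu v hv _ s.a_mem _ s.c_mem huv (s.a_lt_b.trans s.b_lt_c))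
  have hab := hside _ t.a_mem _ t.b_mem t.a_lt_b
  have hbc := hside _ t.b_mem _ t.c_mem t.b_lt_c
  have hac := hside _ t.a_mem _ t.c_mem (t.a_lt_b.trans t.b_lt_c)
  simp only [chordCross, inside, Xor', Xor] at hab hbc hac
  rw [forall_mem_iff] at hd
  simp only [mem_iff] at hd
  obtain ⟨r, hr⟩ := exists_inArc (t := t) (q := s.a) (by rw [mem_iff]; omega)
  refine ⟨r, forall_mem_iff.2 ⟨hr, ?_, ?_⟩⟩ <;>
    fin_cases r <;> simp only [InArc] at hr ⊢ <;> omega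

theorem InsideArc.inArc_of_not_inArc (hs : s.InsideArc t r) {q q' : ℕ}
    (hqt : ¬ t.InArc r q) (hqt' : ¬ t.InArc r q')
    (h : s.InArc r' q) : s.InArc r' q' := by
  have := s.a_lt_b; have := s.b_lt_c; have := t.a_lt_b; have := t.b_lt_c
  rw [InsideArc, forall_mem_iff] at hs
  fin_cases r <;> fin_cases r' <;> simp only [InArc] at hs hqt hqt' h ⊢ <;> omega

theorem not_insideArc_of_insideArc {t₁ t₂ : Triangle n} {r₀ r₁ r₂ : Fin 3}
    (h₂₁ : t₂.InsideArc t₁ r₀)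
    (hf₁ : ∀ v ∈ t₂, ¬ t₁.InArc r₁ v) (hf₂ : ∀ v ∈ t₁, ¬ t₂.InArc r₂ v)
    (hs₁ : s.InsideArc t₁ r₁) : ¬ s.InsideArc t₂ r₂ := by
  intro hs₂
  have := s.a_lt_b; have := s.b_lt_c; have := t₁.a_lt_b; have := t₁.b_lt_c
  have := t₂.a_lt_b; have := t₂.b_lt_c
  rw [InsideArc, forall_mem_iff] at h₂₁ hs₁ hs₂
  rw [forall_mem_iff] at hf₁ hf₂
  fin_cases r₀ <;> fin_cases r₁ <;> fin_cases r₂ <;>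
    simp only [InArc] at h₂₁ hs₁ hs₂ hf₁ hf₂ <;> omega

/-- The arcs with their starting vertex added; they partition `range n`. -/
def arc (t : Triangle n) : Fin 3 → Finset ℕ
  | 0 => Ico t.a t.b
  | 1 => Ico t.b t.c
  | 2 => Ico t.c n ∪ range t.a

theorem arc_subset_range (t : Triangle n) (r : Fin 3) : t.arc r ⊆ range n := by
  have := t.a_lt_b; have := t.b_lt_c; have := t.c_lt
  intro q hq
  fin_cases r <;> simp only [arc, mem_union, mem_Ico, mem_range] at hq ⊢ <;> omega

theorem disjoint_arc_of_ne (t : Triangle n) (h : r ≠ r') : Disjoint (t.arc r) (t.arc r') := by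
  have := t.a_lt_b; have := t.b_lt_c
  rw [disjoint_left]
  intro q hq hq'
  fin_cases r <;> fin_cases r' <;>
    simp only [Fin.zero_eta, Fin.mk_one, Fin.reduceFinMk, Fin.isValue, ne_eq, not_true_eq_false, arc, mem_union, mem_Ico, mem_range]
      at h hq hq' <;> omega

theorem disjoint_arc_of_insideArc {r₀ : Fin 3}
    (hs : s.InsideArc t r₀) (hr : r₀ ≠ r) (hf : ∀ v ∈ t, ¬ s.InArc r' v) :
    Disjoint (t.arc r) (s.arc r') := by
  have := s.a_lt_b; have := s.b_lt_c; have := t.a_lt_b; have := t.b_lt_c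
  rw [InsideArc, forall_mem_iff] at hs
  rw [forall_mem_iff] at hf
  rw [disjoint_left]
  intro q hq hq'
  fin_cases r₀ <;> fin_cases r <;> fin_cases r' <;>
    simp only [Fin.zero_eta, Fin.mk_one, Fin.reduceFinMk, Fin.isValue, ne_eq, not_true_eq_false, InArc, arc, mem_union, mem_Ico, mem_range]
      at hr hs hf hq hq' <;> omega

def vertex (t : Triangle n) : Fin 3 → ℕ
  | 0 => t.a
  | 1 => t.b
  | 2 => t.c

theorem vertex_mem (t : Triangle n) (r : Fin 3) : t.vertex r ∈ t := by
  fin_cases r <;> simp [vertex, mem_iff]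

theorem vertex_ne_vertex_add_one (t : Triangle n) (r : Fin 3) : t.vertex r ≠ t.vertex (r + 1) := by
  have := t.a_lt_b; have := t.b_lt_c
  fin_cases r <;> simp only [Fin.zero_eta, Fin.mk_one, Fin.reduceFinMk, Fin.isValue, Fin.reduceAdd, vertex] <;> omega

theorem card_arc_two (t : Triangle n) : (t.arc 2).card = n - t.c + t.a := by
  have hdisj : Disjoint (Ico t.c n) (range t.a) := by
    rw [disjoint_left]
    intro q hq hq'
    simp only [mem_Ico, mem_range] at hq hq'
    have := t.a_lt_b; have := t.b_lt_c
    omega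
  simp only [arc, card_union_of_disjoint hdisj, Nat.card_Ico, card_range]

theorem vertex_add_card_arc (t : Triangle n) (r : Fin 3) :
    (t.vertex r + (t.arc r).card) % n = t.vertex (r + 1) := by
  have := t.a_lt_b; have := t.b_lt_c; have := t.c_lt
  match r with
  | 0 =>
    simp only [vertex, arc, Nat.card_Ico]
    rw [Nat.add_sub_cancel' (by omega), Nat.mod_eq_of_lt (by omega)]
    rfl
  | 1 =>
    simp only [vertex, arc, Nat.card_Ico]
    rw [Nat.add_sub_cancel' (by omega), Nat.mod_eq_of_lt (by omega)]
    rfl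
  | 2 =>
    simp only [vertex, card_arc_two]
    rw [show t.c + (n - t.c + t.a) = t.a + n by omega, Nat.add_mod_right,
      Nat.mod_eq_of_lt (by omega)]
    rfl

theorem card_arc_pos (t : Triangle n) (r : Fin 3) : 0 < (t.arc r).card := by
  have := t.a_lt_b; have := t.b_lt_c; have := t.c_lt
  match r with
  | 0 => simpa [arc]
  | 1 => simpa [arc]
  | 2 => rw [card_arc_two]; omega

theorem notMem_of_insideArc (h : s.InsideArc t r) {v : ℕ} (hv : v ∈ s) : v ∉ t :=
  fun hvt => not_inArc_of_mem hvt (h v hv)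

end Triangle

section

open Triangle

variable {n : ℕ}

def PairwiseNested (F : Finset (Triangle n)) : Prop :=
  ∀ s ∈ F, ∀ t ∈ F, s ≠ t → ∃ r, s.InsideArc t r

def IsFreeArc (F : Finset (Triangle n)) (t : Triangle n) (r : Fin 3) : Prop :=
  ∀ s ∈ F, s ≠ t → ∀ v ∈ s, ¬ t.InArc r v

open Classical in
noncomputable def freeArcs (F : Finset (Triangle n)) : Finset (Triangle n × Fin 3) :=
  (F ×ˢ univ).filter fun x => IsFreeArc F x.1 x.2

theorem mem_freeArcs {F : Finset (Triangle n)} {x : Triangle n × Fin 3} :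
    x ∈ freeArcs F ↔ x.1 ∈ F ∧ IsFreeArc F x.1 x.2 := by
  simp [freeArcs]

theorem isFreeArc_of_forall_insideArc {F : Finset (Triangle n)} {t : Triangle n} {h r : Fin 3}
    (hear : ∀ s ∈ F, s ≠ t → s.InsideArc t h) (hr : r ≠ h) : IsFreeArc F t r :=
  fun s hs hst v hv hvt => hr (inArc_unique hvt (hear s hs hst v hv))

theorem freeArcs_singleton (t : Triangle n) : freeArcs {t} = {t} ×ˢ univ := by
  ext ⟨s, r⟩
  simp only [mem_freeArcs, IsFreeArc, mem_singleton, forall_eq, mem_product,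
    mem_univ, and_true]
  exact ⟨And.left, fun h => ⟨h, fun hts => absurd h.symm hts⟩⟩

namespace PairwiseNested

variable {F : Finset (Triangle n)}

theorem mono (hF : PairwiseNested F) {G : Finset (Triangle n)} (hG : G ⊆ F) : PairwiseNested G :=
  fun s hs t ht => hF s (hG hs) t (hG ht)

theorem insideArc_of_inArc (hF : PairwiseNested F) {s t : Triangle n} (hs : s ∈ F) (ht : t ∈ F)
    (hst : s ≠ t) {r : Fin 3} {v : ℕ} (hv : v ∈ s) (hvt : t.InArc r v) : s.InsideArc t r := by
  obtain ⟨r', h'⟩ := hF s hs t ht hst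
  rwa [inArc_unique hvt (h' v hv)]

theorem exists_ear_inArc (hF : PairwiseNested F) (hne : F.Nonempty) {p : ℕ}
    (hp : ∀ t ∈ F, p ∉ t) : ∃ t ∈ F, ∃ r, t.InArc r p ∧ ∀ s ∈ F, s ≠ t → s.InsideArc t r := by
  classical
  induction F using strongInduction with
  | H F ih =>
  obtain ⟨t, ht⟩ := hne
  obtain ⟨r, hr⟩ := exists_inArc (hp t ht)
  by_cases hall : ∀ s ∈ F, s ≠ t → s.InsideArc t r
  · exact ⟨t, ht, r, hr, hall⟩
  push Not at hall
  -- Some `s₁` lies in an arc `r₁ ≠ r` of `t`. An ear of the triangles inside arc `r₁`, with `p` in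
  -- the arc holding the others, is an ear of `F`.
  obtain ⟨s₁, hs₁, hs₁t, hs₁r⟩ := hall
  obtain ⟨r₁, h₁⟩ := hF s₁ hs₁ t ht hs₁t
  have hpt : ¬ t.InArc r₁ p := fun h => hs₁r (inArc_unique h hr ▸ h₁)
  set F₁ := F.filter fun s => s ≠ t ∧ s.InsideArc t r₁
  have hF₁ : F₁ ⊂ F := filter_ssubset.2 ⟨t, ht, fun h => h.1 rfl⟩
  obtain ⟨u, hu, r', hpu, hu_ear⟩ := ih F₁ hF₁ (hF.mono hF₁.subset)
    ⟨s₁, mem_filter.2 ⟨hs₁, hs₁t, h₁⟩⟩ fun s hs => hp s (hF₁.subset hs)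
  have hut := (mem_filter.1 hu).2
  refine ⟨u, hF₁.subset hu, r', hpu, fun s hs hsu => ?_⟩
  by_cases hsF₁ : s ∈ F₁
  · exact hu_ear s hsF₁ hsu
  have hout : ∀ v ∈ s, ¬ t.InArc r₁ v := by
    intro v hv hvt
    by_cases hst : s = t
    · exact not_inArc_of_mem (hst ▸ hv) hvt
    · exact hsF₁ (mem_filter.2 ⟨hs, hst, hF.insideArc_of_inArc hs ht hst hv hvt⟩)
  exact fun v hv => hut.2.inArc_of_not_inArc hpt (hout v hv) hpu

theorem exists_ear (hF : PairwiseNested F) (hne : F.Nonempty) :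
    ∃ t ∈ F, ∃ r, ∀ s ∈ F, s ≠ t → s.InsideArc t r := by
  classical
  obtain ⟨t₀, ht₀⟩ := hne
  rcases (F.erase t₀).eq_empty_or_nonempty with hF₀ | hF₀
  · exact ⟨t₀, ht₀, 0, fun s hs hst =>
      absurd (mem_erase.2 ⟨hst, hs⟩) (by simp [hF₀])⟩
  have hp : ∀ s ∈ F.erase t₀, t₀.a ∉ s := fun s hs => by
    obtain ⟨hst, hs⟩ := mem_erase.1 hs
    obtain ⟨r, h⟩ := hF t₀ ht₀ s hs (Ne.symm hst)
    exact notMem_of_insideArc h t₀.a_mem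
  obtain ⟨u, hu, r, hpu, hu_ear⟩ :=
    (hF.mono (erase_subset _ _)).exists_ear_inArc hF₀ hp
  obtain ⟨hut, hu⟩ := mem_erase.1 hu
  refine ⟨u, hu, r, fun s hs hsu => ?_⟩
  by_cases hst : s = t₀
  · exact hF.insideArc_of_inArc hs hu (hst ▸ hsu) (hst ▸ t₀.a_mem) (hst ▸ hpu)
  · exact hu_ear s (mem_erase.2 ⟨hst, hs⟩) hsu

theorem isFreeArc_of_isFreeArc_erase (hF : PairwiseNested F) {t₀ t : Triangle n} (ht : t ∈ F)
    {r : Fin 3} (hfree : IsFreeArc (F.erase t₀) t r) (h : ¬ t₀.InsideArc t r) :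
    IsFreeArc F t r := by
  intro s hs hst v hv hvt
  by_cases hs₀ : s = t₀
  · exact h (hs₀ ▸ hF.insideArc_of_inArc hs ht hst hv hvt)
  · exact hfree s (mem_erase.2 ⟨hs₀, hs⟩) hst v hv hvt

theorem subsingleton_insideArc (hF : PairwiseNested F) (t₀ : Triangle n) :
    {x | x ∈ freeArcs F ∧ t₀.InsideArc x.1 x.2}.Subsingleton := by
  rintro x ⟨hx, hxt₀⟩ y ⟨hy, hyt₀⟩
  rw [mem_freeArcs] at hx hy
  by_cases hxy : x.1 = y.1
  · refine Prod.ext hxy (inArc_unique (hxt₀ _ t₀.a_mem) ?_)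
    rw [hxy]
    exact hyt₀ _ t₀.a_mem
  obtain ⟨r₀, h₀⟩ := hF y.1 hy.1 x.1 hx.1 (Ne.symm hxy)
  exact absurd hyt₀ <| not_insideArc_of_insideArc h₀ (hx.2 y.1 hy.1 (Ne.symm hxy))
    (hy.2 x.1 hx.1 hxy) hxt₀

/-- Adding an ear `t₀` destroys at most one free arc, the one containing `t₀`, and creates two. -/
theorem card_freeArcs_erase_add_one_le (hF : PairwiseNested F) {t₀ : Triangle n} (ht₀ : t₀ ∈ F)
    {h : Fin 3} (hear : ∀ s ∈ F, s ≠ t₀ → s.InsideArc t₀ h) :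
    (freeArcs (F.erase t₀)).card + 1 ≤ (freeArcs F).card := by
  classical
  have hlost : ((freeArcs (F.erase t₀)).filter fun x => t₀.InsideArc x.1 x.2).card ≤ 1 :=
    card_le_one.2 fun x hx y hy =>
      (hF.mono (erase_subset t₀ F)).subsingleton_insideArc t₀
        (mem_filter.1 hx) (mem_filter.1 hy)
  have hsplit := card_filter_add_card_filter_not (s := freeArcs (F.erase t₀))
    fun x => t₀.InsideArc x.1 x.2
  set kept := (freeArcs (F.erase t₀)).filter fun x => ¬ t₀.InsideArc x.1 x.2
  have hsub : kept ∪ {t₀} ×ˢ (univ.erase h) ⊆ freeArcs F := by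
    refine union_subset (fun x hx => ?_) (fun x hx => ?_)
    · obtain ⟨hx, hxt₀⟩ := mem_filter.1 hx
      obtain ⟨hx, hfree⟩ := mem_freeArcs.1 hx
      exact mem_freeArcs.2 ⟨mem_of_mem_erase hx,
        hF.isFreeArc_of_isFreeArc_erase (mem_of_mem_erase hx) hfree hxt₀⟩
    · obtain ⟨t, r⟩ := x
      simp only [mem_product, mem_singleton, mem_erase] at hx
      obtain ⟨rfl, hr, -⟩ := hx
      exact mem_freeArcs.2 ⟨ht₀, isFreeArc_of_forall_insideArc hear hr⟩
  have hdisj : Disjoint kept ({t₀} ×ˢ (univ.erase h)) := by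
    simp only [kept, disjoint_left, mem_filter, mem_freeArcs, mem_product,
      mem_singleton]
    exact fun x hx hx₀ => by simp [hx₀.1] at hx
  have hcard := card_le_card hsub
  rw [card_union_of_disjoint hdisj, card_product, card_singleton,
    card_erase_of_mem (mem_univ h), card_univ, Fintype.card_fin] at hcard
  omega

theorem card_add_two_le_card_freeArcs (hF : PairwiseNested F) (hne : F.Nonempty) :
    F.card + 2 ≤ (freeArcs F).card := by
  classical
  induction F using strongInduction with
  | H F ih =>
  obtain ⟨t₀, ht₀, h, hear⟩ := hF.exists_ear hne
  rcases (F.erase t₀).eq_empty_or_nonempty with hF₀ | hF₀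
  · obtain rfl : F = {t₀} :=
      ((erase_eq_empty_iff F t₀).1 hF₀).resolve_left (ne_empty_of_mem ht₀)
    simp [freeArcs_singleton]
  have := ih _ (erase_ssubset ht₀) (hF.mono (erase_subset _ _)) hF₀
  have := hF.card_freeArcs_erase_add_one_le ht₀ hear
  have := card_erase_add_one ht₀
  omega

theorem pairwiseDisjoint_arc (hF : PairwiseNested F) :
    (freeArcs F : Set (Triangle n × Fin 3)).PairwiseDisjoint fun x => x.1.arc x.2 := by
  rintro ⟨t, r⟩ hx ⟨s, r'⟩ hy hxy
  rw [mem_coe, mem_freeArcs] at hx hy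
  by_cases hts : t = s
  · subst hts
    exact t.disjoint_arc_of_ne fun h => hxy (Prod.ext rfl h)
  obtain ⟨r₀, h₀⟩ := hF s hy.1 t hx.1 (Ne.symm hts)
  have hr₀ : r₀ ≠ r := fun h => hx.2 s hy.1 (Ne.symm hts) _ s.a_mem (h ▸ h₀ _ s.a_mem)
  exact disjoint_arc_of_insideArc h₀ hr₀ (hy.2 t hx.1 hts)

theorem card_add_two_mul_le (hF : PairwiseNested F) (hne : F.Nonempty) {g : ℕ}
    (hg : ∀ t ∈ F, ∀ r, g ≤ (t.arc r).card) : (F.card + 2) * g ≤ n := by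
  classical
  calc (F.card + 2) * g ≤ (freeArcs F).card * g :=
        Nat.mul_le_mul_right g (hF.card_add_two_le_card_freeArcs hne)
    _ ≤ ∑ x ∈ freeArcs F, (x.1.arc x.2).card :=
        card_nsmul_le_sum _ _ _ fun x hx => hg _ (mem_freeArcs.1 hx).1 _
    _ = ((freeArcs F).biUnion fun x => x.1.arc x.2).card :=
        (card_biUnion hF.pairwiseDisjoint_arc).symm
    _ ≤ (range n).card :=
        card_le_card (biUnion_subset.2 fun x _ => x.1.arc_subset_range x.2)
    _ = n := card_range n

end PairwiseNested

namespace Triangle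

def ofFinset (p : Finset (Fin n)) (hp : p.card = 3) : Triangle n where
  a := p.orderEmbOfFin hp 0
  b := p.orderEmbOfFin hp 1
  c := p.orderEmbOfFin hp 2
  a_lt_b := (p.orderEmbOfFin hp).strictMono (by decide)
  b_lt_c := (p.orderEmbOfFin hp).strictMono (by decide)
  c_lt := (p.orderEmbOfFin hp 2).isLt

variable {p : Finset (Fin n)} {hp : p.card = 3}

theorem mem_ofFinset {v : ℕ} : v ∈ ofFinset p hp ↔ ∃ i ∈ p, (i : ℕ) = v := by
  constructor
  · rintro (rfl | rfl | rfl) <;> exact ⟨_, p.orderEmbOfFin_mem hp _, rfl⟩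
  · rintro ⟨i, hi, rfl⟩
    rw [← mem_coe, ← p.range_orderEmbOfFin hp] at hi
    obtain ⟨j, rfl⟩ := hi
    fin_cases j <;> simp [mem_iff, ofFinset]

theorem ofFinset_injective {q : Finset (Fin n)} {hq : q.card = 3}
    (h : ofFinset p hp = ofFinset q hq) : p = q := by
  ext i
  have hi : (i : ℕ) ∈ ofFinset p hp ↔ (i : ℕ) ∈ ofFinset q hq := by rw [h]
  simpa only [mem_ofFinset, Fin.val_inj, exists_eq_right] using hi

theorem exists_insideArc_of_not_convIntersects {q : Finset (Fin n)} {hq : q.card = 3}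
    (h : ¬ ConvIntersects p q) : ∃ r, (ofFinset q hq).InsideArc (ofFinset p hp) r := by
  rw [ConvIntersects, not_or, not_nonempty_iff_eq_empty,
    ← disjoint_iff_inter_eq_empty] at h
  obtain ⟨hdisj, hcross⟩ := h
  push Not at hcross
  refine exists_insideArc_of_not_chordCross ?_ ?_
  · rintro v hv hv'
    obtain ⟨j, hj, rfl⟩ := mem_ofFinset.1 hv
    obtain ⟨i, hi, hij⟩ := mem_ofFinset.1 hv'
    exact disjoint_left.1 hdisj (Fin.val_inj.1 hij ▸ hi) hj
  · rintro _ hu _ hv _ hs _ ht huv hst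
    obtain ⟨i, hi, rfl⟩ := mem_ofFinset.1 hu
    obtain ⟨j, hj, rfl⟩ := mem_ofFinset.1 hv
    obtain ⟨k, hk, rfl⟩ := mem_ofFinset.1 hs
    obtain ⟨l, hl, rfl⟩ := mem_ofFinset.1 ht
    exact hcross i hi j hj k hk l hl (fun h => huv.ne (congrArg _ h))
      (fun h => hst.ne (congrArg _ h))

end Triangle

/-- The shortest side of `p` has cyclic length at most `m`. -/
def IsShort (m : ℕ) (p : Finset (Fin n)) : Prop :=
  ∃ hp : p.card = 3, ∃ r, ((Triangle.ofFinset p hp).arc r).card ≤ m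

theorem IsTriDecomp.card_le_of_isShort {P : Finset (Finset (Fin n))} (hP : IsTriDecomp n P)
    {m : ℕ} {S : Finset (Finset (Fin n))} (hSP : S ⊆ P) (hS : ∀ p ∈ S, IsShort m p) :
    S.card ≤ n * m := by
  -- a short triangle is determined by the start and the length of its short arc
  let Encodes (p : Finset (Fin n)) (e : ℕ × ℕ) : Prop :=
    ∃ i ∈ p, ∃ j ∈ p, i ≠ j ∧ (i : ℕ) = e.1 ∧ (j : ℕ) = (e.1 + e.2) % n
  calc S.card ≤ (range n ×ˢ Icc 1 m).card := by
        refine card_le_card_of_forall_subsingleton Encodes (fun p hp => ?_) ?_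
        · obtain ⟨hp3, r, hr⟩ := hS p hp
          set t := Triangle.ofFinset p hp3
          obtain ⟨i, hi, hiv⟩ := Triangle.mem_ofFinset.1 (t.vertex_mem r)
          obtain ⟨j, hj, hjv⟩ := Triangle.mem_ofFinset.1 (t.vertex_mem (r + 1))
          refine ⟨(t.vertex r, (t.arc r).card), ?_, i, hi, j, hj, ?_, hiv, ?_⟩
          · simp only [mem_product, mem_range, mem_Icc]
            exact ⟨hiv ▸ i.isLt, t.card_arc_pos r, hr⟩
          · exact fun h => t.vertex_ne_vertex_add_one r (hiv ▸ hjv ▸ congrArg _ h)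
          · rw [hjv, t.vertex_add_card_arc]
        · rintro e - p ⟨hp, i, hi, j, hj, hij, hie, hje⟩ q ⟨hq, i', hi', j', hj', -, hie', hje'⟩
          obtain rfl : i = i' := Fin.ext (hie.trans hie'.symm)
          obtain rfl : j = j' := Fin.ext (hje.trans hje'.symm)
          obtain ⟨_, -, huniq⟩ := hP.2 i j hij
          exact (huniq p ⟨hSP hp, hi, hj⟩).trans (huniq q ⟨hSP hq, hi', hj'⟩).symm
    _ = n * m := by simp

theorem IsTriDecomp.card_mul_three {P : Finset (Finset (Fin n))} (hP : IsTriDecomp n P) :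
    P.card * 3 = n.choose 2 := by
  classical
  have hcover : (univ : Finset (Fin n)).powersetCard 2 = P.biUnion (·.powersetCard 2) := by
    ext e
    simp only [mem_powersetCard, subset_univ, true_and, mem_biUnion]
    refine ⟨fun he => ?_, fun ⟨_, _, _, he⟩ => he⟩
    obtain ⟨i, j, hij, rfl⟩ := card_eq_two.1 he
    obtain ⟨p, ⟨hp, hip, hjp⟩, -⟩ := hP.2 i j hij
    exact ⟨p, hp, insert_subset hip (singleton_subset_iff.2 hjp), he⟩
  have hdisj : (P : Set (Finset (Fin n))).PairwiseDisjoint (·.powersetCard 2) := by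
    intro p hp q hq hpq
    refine disjoint_left.2 fun e hep heq => hpq ?_
    rw [mem_powersetCard] at hep heq
    obtain ⟨i, j, hij, rfl⟩ := card_eq_two.1 hep.2
    obtain ⟨_, -, huniq⟩ := hP.2 i j hij
    exact (huniq p ⟨hp, hep.1 (by simp), hep.1 (by simp)⟩).trans
      (huniq q ⟨hq, heq.1 (by simp), heq.1 (by simp)⟩).symm
  calc P.card * 3 = ∑ p ∈ P, (p.powersetCard 2).card := by
        rw [sum_congr rfl fun p hp => by rw [card_powersetCard, hP.1 p hp]]
        simp
    _ = n.choose 2 := by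
        rw [← card_biUnion hdisj, ← hcover, card_powersetCard, card_univ,
          Fintype.card_fin]

theorem add_two_mul_le_of_pairwise_not_convIntersects {C : Finset (Finset (Fin n))}
    (hC3 : ∀ p ∈ C, p.card = 3) (hC : ∀ p ∈ C, ∀ q ∈ C, p ≠ q → ¬ ConvIntersects p q)
    (hne : C.Nonempty) {m : ℕ} (hlarge : ∀ p ∈ C, ¬ IsShort m p) :
    (C.card + 2) * (m + 1) ≤ n := by
  classical
  set F := C.attach.image fun p => Triangle.ofFinset p.1 (hC3 p.1 p.2)
  have hF : F.card = C.card := by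
    rw [card_image_of_injective _ fun p q h => Subtype.ext (Triangle.ofFinset_injective h),
      card_attach]
  have hnested : PairwiseNested F := by
    simp only [PairwiseNested, F, mem_image, mem_attach, true_and]
    rintro _ ⟨⟨q, hq⟩, rfl⟩ _ ⟨⟨p, hp⟩, rfl⟩ hqp
    exact Triangle.exists_insideArc_of_not_convIntersects (hC p hp q hq fun h => hqp (by subst h; rfl))
  rw [← hF]
  refine hnested.card_add_two_mul_le (hne.attach.image _) ?_
  simp only [F, mem_image, mem_attach, true_and]
  rintro _ ⟨⟨p, hp⟩, rfl⟩ r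
  exact le_of_not_gt fun h => hlarge p hp ⟨hC3 p hp, r, Nat.le_of_lt_succ h⟩

theorem card_le_sub_two_of_pairwise_not_convIntersects {C : Finset (Finset (Fin n))}
    (hC3 : ∀ p ∈ C, p.card = 3) (hC : ∀ p ∈ C, ∀ q ∈ C, p ≠ q → ¬ ConvIntersects p q)
    {x : ℝ} (hx : 3 ≤ x) (hlarge : ∀ p ∈ C, ¬ IsShort ⌊(n : ℝ) / x⌋₊ p) :
    (C.card : ℝ) ≤ x - 2 := by
  rcases C.eq_empty_or_nonempty with rfl | hne
  · simp only [card_empty, Nat.cast_zero]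
    linarith
  have h := add_two_mul_le_of_pairwise_not_convIntersects hC3 hC hne hlarge
  have hn : (0 : ℝ) < n := by exact_mod_cast lt_of_lt_of_le (by positivity) h
  have hmul : ((C.card : ℝ) + 2) * (n / x) ≤ n :=
    calc ((C.card : ℝ) + 2) * (n / x) ≤ ((C.card : ℝ) + 2) * (⌊(n : ℝ) / x⌋₊ + 1) := by
          gcongr
          exact (Nat.lt_floor_add_one _).le
      _ ≤ n := by exact_mod_cast h
  rw [mul_div_assoc', div_le_iff₀ (by linarith)] at hmul
  nlinarith

theorem card_le_mul_of_not_isShort {P : Finset (Finset (Fin n))} (hP : IsTriDecomp n P)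
    {f : Finset (Fin n) → ℕ} (hcol : ∀ p ∈ P, ∀ q ∈ P, p ≠ q → ConvIntersects p q → f p ≠ f q)
    {x : ℝ} (hx : 3 ≤ x) {L : Finset (Finset (Fin n))} (hLP : L ⊆ P)
    (hL : ∀ p ∈ L, ¬ IsShort ⌊(n : ℝ) / x⌋₊ p) :
    (L.card : ℝ) ≤ (P.image f).card * (x - 2) := by
  classical
  rw [card_eq_sum_card_fiberwise fun p hp => mem_image_of_mem f (hLP hp)]
  push_cast
  calc ∑ c ∈ P.image f, ((L.filter (f · = c)).card : ℝ) ≤ ∑ _c ∈ P.image f, (x - 2) := by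
        refine sum_le_sum fun c _ => card_le_sub_two_of_pairwise_not_convIntersects
          (fun p hp => hP.1 p (hLP (mem_filter.1 hp).1)) (fun p hp q hq hpq hpq' => ?_) hx
          fun p hp => hL p (mem_filter.1 hp).1
        rw [mem_filter] at hp hq
        exact hcol p (hLP hp.1) q (hLP hq.1) hpq hpq' (hp.2.trans hq.2.symm)
    _ = (P.image f).card * (x - 2) := by rw [sum_const, nsmul_eq_mul]

theorem choose_two_div_three_sub_div_le {P : Finset (Finset (Fin n))} (hP : IsTriDecomp n P)
    {f : Finset (Fin n) → ℕ} (hcol : ∀ p ∈ P, ∀ q ∈ P, p ≠ q → ConvIntersects p q → f p ≠ f q)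
    {x : ℝ} (hx : 3 ≤ x) :
    ((n.choose 2 : ℝ) / 3 - n ^ 2 / x) / (x - 2) ≤ (P.image f).card := by
  classical
  set m := ⌊(n : ℝ) / x⌋₊
  have hsplit := card_filter_add_card_filter_not (s := P) (IsShort m)
  have hshort := hP.card_le_of_isShort (filter_subset (IsShort m) P)
    fun p hp => (mem_filter.1 hp).2
  have hlarge := card_le_mul_of_not_isShort hP hcol hx (filter_subset _ _)
    fun p hp => (mem_filter.1 hp).2
  have hm : (n : ℝ) * m ≤ n ^ 2 / x := by
    calc (n : ℝ) * m ≤ n * (n / x) := by gcongr; exact Nat.floor_le (by positivity)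
      _ = n ^ 2 / x := by ring
  have hP3 : (P.card : ℝ) * 3 = n.choose 2 := by exact_mod_cast hP.card_mul_three
  have hsplit' : ((P.filter (IsShort m)).card : ℝ) + (P.filter fun p => ¬ IsShort m p).card
      = P.card := by exact_mod_cast hsplit
  have hshort' : ((P.filter (IsShort m)).card : ℝ) ≤ n * m := by exact_mod_cast hshort
  rw [div_le_iff₀ (by linarith)]
  linarith

end

/-- `x = 6 + 2√6` maximises `(1 / 6 - 1 / x) / (x - 2)`. -/
theorem sq_div_sub_le_at_optimum (n : ℕ) :
    (n : ℝ) ^ 2 / (60 + 24 * Real.sqrt 6) - n ≤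
      ((n.choose 2 : ℝ) / 3 - n ^ 2 / (6 + 2 * Real.sqrt 6)) / (6 + 2 * Real.sqrt 6 - 2) := by
  set s := Real.sqrt 6
  have hs : s ^ 2 = 6 := Real.sq_sqrt (by norm_num)
  have hs2 : 2 ≤ s := by nlinarith [Real.sqrt_nonneg 6]
  have hexact : ((n.choose 2 : ℝ) / 3 - n ^ 2 / (6 + 2 * s)) / (6 + 2 * s - 2)
      = n ^ 2 / (60 + 24 * s) - n / (6 * (4 + 2 * s)) := by
    rw [Nat.cast_choose_two, div_eq_iff (by linarith)]
    field_simp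
    linear_combination ((n : ℝ) ^ 2 * (576 + 288 * s)) * hs
  rw [hexact]
  have : (n : ℝ) / (6 * (4 + 2 * s)) ≤ n := div_le_self (Nat.cast_nonneg n) (by linarith)
  linarith

theorem sq_div_119_le (n : ℕ) : (n : ℝ) ^ 2 / 119 ≤ n ^ 2 / (60 + 24 * Real.sqrt 6) := by
  have hs : Real.sqrt 6 ^ 2 = 6 := Real.sq_sqrt (by norm_num)
  have : Real.sqrt 6 ≤ 59 / 24 := by nlinarith [Real.sqrt_nonneg 6]
  exact div_le_div_of_nonneg_left (sq_nonneg _) (by positivity) (by linarith)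

/-- Every decomposition of `K^c_n` into triangles has chromatic index at least
`(C(n,2)/3 - n²/x)/(x-2)` for every `x ≥ 3`; with `x = 2(3+√6)` this gives
`n²/(60+24√6) - O(n) > n²/119 - O(n)` colors in any proper coloring. -/
theorem stmt12 :
    ∃ C : ℝ, ∀ (n : ℕ) (P : Finset (Finset (Fin n))), IsTriDecomp n P →
      ∀ f : Finset (Fin n) → ℕ,
        (∀ p ∈ P, ∀ q ∈ P, p ≠ q → ConvIntersects p q → f p ≠ f q) →
        (∀ x : ℝ, 3 ≤ x →
            ((n.choose 2 : ℝ) / 3 - (n : ℝ) ^ 2 / x) / (x - 2) ≤ ((P.image f).card : ℝ)) ∧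
        (n : ℝ) ^ 2 / (60 + 24 * Real.sqrt 6) - C * n ≤ ((P.image f).card : ℝ) ∧
        (n : ℝ) ^ 2 / 119 - C * n ≤ ((P.image f).card : ℝ) := by
  refine ⟨1, fun n P hP f hcol => ?_⟩
  have hbound := fun x (hx : 3 ≤ x) => choose_two_div_three_sub_div_le hP hcol hx
  have hopt := hbound (6 + 2 * Real.sqrt 6) (by linarith [Real.sqrt_nonneg 6])
  have := sq_div_sub_le_at_optimum n
  have := sq_div_119_le n
  refine ⟨hbound, ?_, ?_⟩ <;> linarith
end

section
/- Let (d₁, d₂, d₃) be a difference triple modulo n, i.e., 1 ≤ d₁ < d₂ < d₃ ≤ n/2 and either d₁ + d₂ + d₃ ≡ 0 (mod n) or d₁ + d₂ ≡ d₃ (mod n). Then the triples {x, x+d₁, x+d₁+d₂} for x ∈ ℤ/nℤ form a family of n triples such that every edge of K_n whose length lies in {d₁, d₂, d₃} is covered exactly once, provided n is odd and 3∤n. -/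
open Finset

/-- The length of the edge `{a,b}` of `K_n` with vertex set `ℤ/nℤ`. -/
def pairlen (n : ℕ) (a b : ZMod n) : ℕ := min (a - b).val (b - a).val

/-!
The base triangle `B = {0, d₁, d₁ + d₂}` has the six nonzero differences `±d₁, ±d₂, ±d₃`
(as `d₃ ≡ ±(d₁ + d₂)`), and these are pairwise distinct in `ℤ/nℤ` since
`0 < d₁ < d₂ < d₃ < n/2 < n - d₃ < n - d₂ < n - d₁`. An edge `{a, b}` lies in the translate
`x + B` iff `(a - x, b - x)` is a pair of `B` with difference `b - a`; that pair is unique,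
so exactly one translate contains the edge. In particular distinct `x` give distinct translates.
-/

section AddCommGroup

variable {G : Type*} [AddCommGroup G]

theorem existsUnique_sub_mem_of_injOn_sub {B : Set G}
    (hB : B.offDiag.InjOn fun ij => ij.2 - ij.1)
    {a b i j : G} (hab : a ≠ b) (hi : i ∈ B) (hj : j ∈ B) (hij : j - i = b - a) :
    ∃! x : G, a - x ∈ B ∧ b - x ∈ B := by
  refine ⟨a - i, ⟨by rwa [sub_sub_cancel], by rwa [← sub_add, ← hij, sub_add_cancel]⟩, ?_⟩
  rintro y ⟨hay, hby⟩
  have hne : i ≠ j := by rintro rfl; exact hab (sub_eq_zero.mp (by rw [← hij, sub_self])).symm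
  have hy : (a - y, b - y) = (i, j) :=
    hB ⟨hay, hby, sub_left_injective.ne hab⟩ ⟨hi, hj, hne⟩
      (by simp only [sub_sub_sub_cancel_right, hij])
  rw [← (Prod.mk.inj hy).1, sub_sub_cancel]

def triangle [DecidableEq G] (p q x : G) : Finset G := {x, x + p, x + (p + q)}

theorem mem_triangle [DecidableEq G] {p q x a : G} :
    a ∈ triangle p q x ↔ a - x ∈ ({0, p, p + q} : Set G) := by
  simp [triangle, sub_eq_iff_eq_add, add_comm]

/-- Group version of a difference triple: the inequalities `1 ≤ d₁ < d₂ < d₃ < n/2` are replaced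
by the distinctness of the six directions `±dᵢ` that they imply. -/
structure IsDifferenceTriple (p q r : G) : Prop where
  eq_add_or_eq_neg_add : r = p + q ∨ r = -(p + q)
  nodup : [p, q, r, -r, -q, -p].Nodup

namespace IsDifferenceTriple

variable {p q r : G}

theorem injOn_sub_offDiag (h : IsDifferenceTriple p q r) :
    ({0, p, p + q} : Set G).offDiag.InjOn fun ij => ij.2 - ij.1 := by
  obtain ⟨hr | hr, hnodup⟩ := h <;> subst hr <;>
  · simp only [List.nodup_cons, List.mem_cons, List.not_mem_nil] at hnodup
    rintro ⟨i, j⟩ ⟨hi, hj, hij⟩ ⟨k, l⟩ ⟨hk, hl, hkl⟩ heq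
    simp only [Set.mem_insert_iff, Set.mem_singleton_iff] at hi hj hk hl
    rcases hi with rfl | rfl | rfl <;> rcases hj with rfl | rfl | rfl <;>
      rcases hk with rfl | rfl | rfl <;> rcases hl with rfl | rfl | rfl <;> grind

theorem exists_sub_eq (h : IsDifferenceTriple p q r) {δ : G} (hδ : δ ∈ [p, q, r, -r, -q, -p]) :
    ∃ i ∈ ({0, p, p + q} : Set G), ∃ j ∈ ({0, p, p + q} : Set G), j - i = δ := by
  simp only [List.mem_cons, List.not_mem_nil, or_false] at hδ
  obtain ⟨hr | hr, -⟩ := h <;> subst hr <;> rcases hδ with rfl | rfl | rfl | rfl | rfl | rfl <;>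
    simp

theorem existsUnique_mem_triangle [DecidableEq G] (h : IsDifferenceTriple p q r) {a b : G}
    (hab : a ≠ b) (hba : b - a ∈ [p, q, r, -r, -q, -p]) :
    ∃! x : G, a ∈ triangle p q x ∧ b ∈ triangle p q x := by
  obtain ⟨i, hi, j, hj, hij⟩ := h.exists_sub_eq hba
  simpa only [mem_triangle] using
    existsUnique_sub_mem_of_injOn_sub h.injOn_sub_offDiag hab hi hj hij

theorem triangle_injective [DecidableEq G] (h : IsDifferenceTriple p q r) :
    Function.Injective (triangle p q) := by
  intro x y hxy
  have hp : p ≠ 0 := fun hp => by simpa [hp] using h.nodup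
  have hx : x ∈ triangle p q x ∧ x + p ∈ triangle p q x := by simp [triangle]
  have hy : x ∈ triangle p q y ∧ x + p ∈ triangle p q y := hxy ▸ hx
  exact (h.existsUnique_mem_triangle (by simpa using hp) (by simp)).unique hx hy

end IsDifferenceTriple

end AddCommGroup

theorem ZMod.isDifferenceTriple_natCast {n d1 d2 d3 : ℕ} (h1 : 0 < d1) (h12 : d1 < d2)
    (h23 : d2 < d3) (h3n : 2 * d3 < n)
    (hd3 : (d3 : ZMod n) = d1 + d2 ∨ (d3 : ZMod n) = -(d1 + d2)) :
    IsDifferenceTriple (d1 : ZMod n) d2 d3 := by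
  refine ⟨hd3, ?_⟩
  have hmap : [(d1 : ZMod n), d2, d3, -d3, -d2, -d1] =
      [d1, d2, d3, n - d3, n - d2, n - d1].map (Nat.cast : ℕ → ZMod n) := by
    simp [Nat.cast_sub (by omega : d1 ≤ n), Nat.cast_sub (by omega : d2 ≤ n),
      Nat.cast_sub (by omega : d3 ≤ n)]
  rw [hmap]
  refine List.Nodup.map_on (fun k hk l hl hkl => ?_) ?_
  · simp only [List.mem_cons, List.not_mem_nil, or_false] at hk hl
    rw [← ZMod.val_cast_of_lt (n := n) (a := k) (by omega), hkl, ZMod.val_cast_of_lt (by omega)]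
  · simp only [List.nodup_cons, List.mem_cons, List.not_mem_nil, List.nodup_nil, or_false,
      not_false_eq_true, and_true]
    omega

theorem sub_eq_or_eq_neg_of_pairlen_eq {n : ℕ} [NeZero n] {a b : ZMod n} {k : ℕ}
    (h : pairlen n a b = k) : b - a = k ∨ b - a = -k := by
  rcases min_choice (a - b).val (b - a).val with h' | h' <;> rw [pairlen, h'] at h <;>
    rw [← h, ZMod.natCast_zmod_val]
  · exact Or.inr (neg_sub a b).symm
  · exact Or.inl rfl

theorem ZMod.natCast_eq_add_or_eq_neg_add {n a b c : ℕ}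
    (h : (a + b + c) % n = 0 ∨ (a + b) % n = c % n) :
    (c : ZMod n) = a + b ∨ (c : ZMod n) = -(a + b) := by
  rcases h with h | h
  · have habc := ZMod.natCast_mod (a + b + c) n
    rw [h, Nat.cast_zero] at habc
    push_cast at habc
    exact Or.inr (by linear_combination -habc)
  · have hc := (ZMod.natCast_eq_natCast_iff' _ _ n).mpr h.symm
    push_cast at hc
    exact Or.inl hc

theorem stmt15_general (n : ℕ) (hn : Odd n)
    (d1 d2 d3 : ℕ) (h1 : 1 ≤ d1) (h12 : d1 < d2) (h23 : d2 < d3) (h3n : 2 * d3 ≤ n)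
    (hsum : (d1 + d2 + d3) % n = 0 ∨ (d1 + d2) % n = d3 % n) :
    let T : ZMod n → Finset (ZMod n) :=
      fun x => {x, x + (d1 : ZMod n), x + ((d1 + d2 : ℕ) : ZMod n)}
    (((Finset.range n).image (fun x : ℕ => T (x : ZMod n))).card = n) ∧
    ∀ a b : ZMod n, a ≠ b → pairlen n a b ∈ ({d1, d2, d3} : Set ℕ) →
      ∃! x : ZMod n, a ∈ T x ∧ b ∈ T x := by
  intro T
  have : NeZero n := ⟨by omega⟩
  have hT : T = triangle (d1 : ZMod n) d2 := by
    funext x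
    simp [T, triangle]
  have h2d3 : 2 * d3 < n := by
    obtain ⟨k, rfl⟩ := hn
    omega
  have hD := ZMod.isDifferenceTriple_natCast h1 h12 h23 h2d3
    (ZMod.natCast_eq_add_or_eq_neg_add hsum)
  rw [hT]
  refine ⟨?_, fun a b hab hlen => hD.existsUnique_mem_triangle hab ?_⟩
  · refine card_image_of_injOn (hD.triangle_injective.comp_injOn fun x hx y hy hxy => ?_) |>.trans
      (card_range n)
    rw [← ZMod.val_cast_of_lt (mem_range.mp hx), hxy, ZMod.val_cast_of_lt (mem_range.mp hy)]
  · simp only [Set.mem_insert_iff, Set.mem_singleton_iff] at hlen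
    rcases hlen with h | h | h <;>
      rcases sub_eq_or_eq_neg_of_pairlen_eq h with h' | h' <;> simp [h']

/-- If `(d₁,d₂,d₃)` is a difference triple mod `n` (with `n` odd, `3 ∤ n`), then
the `n` translates `{x, x+d₁, x+d₁+d₂}`, `x ∈ ℤ/nℤ`, form a family of `n`
triples covering each edge of `K_n` of length in `{d₁,d₂,d₃}` exactly once. -/
theorem stmt15 (n : ℕ) (hn : Odd n) (h3 : ¬ (3 ∣ n))
    (d1 d2 d3 : ℕ) (h1 : 1 ≤ d1) (h12 : d1 < d2) (h23 : d2 < d3) (h3n : 2 * d3 ≤ n)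
    (hsum : (d1 + d2 + d3) % n = 0 ∨ (d1 + d2) % n = d3 % n) :
    let T : ZMod n → Finset (ZMod n) :=
      fun x => {x, x + (d1 : ZMod n), x + ((d1 + d2 : ℕ) : ZMod n)}
    (((Finset.range n).image (fun x : ℕ => T (x : ZMod n))).card = n) ∧
    ∀ a b : ZMod n, a ≠ b → pairlen n a b ∈ ({d1, d2, d3} : Set ℕ) →
      ∃! x : ZMod n, a ∈ T x ∧ b ∈ T x :=
  stmt15_general n hn d1 d2 d3 h1 h12 h23 h3n hsum
end
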